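/- arXiv:1706.01949 — 7 statements merged into one kernel-verified Lean document; each statement's English description precedes it below -/
import Mathlib

section
/- Let Q ∈ ℝ^{P×P} be symmetric, r ∈ ℝ^P, F ∈ ℝ^{m×P}, g ∈ ℝ^m, and let ℒ ⊆ {1,…,P}. Assume that every ξ ∈ ℝ^P with ξ ≥ 0 and Fξ = g satisfies ξ_ℓ ≤ 1 for all ℓ ∈ ℒ. Then the optimal value of the mixed-binary quadratic program sup{ ξᵀQξ + rᵀξ : ξ ∈ ℝ^P, ξ ≥ 0, Fξ = g, ξ_ℓ ∈ {0,1} for all ℓ ∈ ℒ } equals the optimal value of the completely positive program sup{ tr(ΩQ) + rᵀξ : ξ ∈ ℝ^P, ξ ≥ 0, Ω ∈ ℝ^{P×P} symmetric positive semidefinite, Fξ = g, diag(FΩFᵀ) = g∘g, ξ_ℓ = Ω_{ℓℓ} for all ℓ ∈ ℒ, and the (P+1)×(P+1) block matrix [[Ω, ξ],[ξᵀ, 1]] is completely positive }, where both suprema are taken in the extended reals (so they agree also when both problems are infeasible or unbounded). -/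
/-!
Lifting `ξ ↦ (ξ, ξ ξᵀ)` shows that the completely positive program is a relaxation. Conversely,
factor the lifted matrix as `[B; βᵀ] [B; βᵀ]ᵀ` with `B, β ≥ 0`, so that `Ω = B Bᵀ`, `ξ = B β` and
`‖β‖ = 1`. The constraints `F ξ = g` and `diag (F Ω Fᵀ) = g ∘ g` are the equality case of
Cauchy–Schwarz for the rows of `F B` against `β`, whence `F bₖ = βₖ g` for every column `bₖ`.
The columns with `βₖ > 0` rescale to feasible points, and those with `βₖ = 0` are recession
directions of `{ξ ≥ 0, F ξ = g}`, which vanish on `ℒ` because `ξ_ℓ ≤ 1` there. With `bₖℓ ≤ βₖ`,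
the constraint `ξ_ℓ = Ω_ℓℓ` reads `∑ₖ bₖℓ (βₖ - bₖℓ) = 0`, so every rescaled column is binary
on `ℒ`. Finally, with `f` the quadratic objective, the value is `∑ₖ βₖ² f(bₖ / βₖ)` plus the
terms `bₖᵀ Q bₖ` with `βₖ = 0`: either one of those is positive, and the mixed-binary program
is unbounded along that direction, or the value is at most a convex combination of feasible
values.
-/

open Matrix

/-- A symmetric matrix is completely positive if it factors as `B * Bᵀ` with `B` entrywise
nonnegative. -/
def IsCompletelyPositive {n : Type*} [Fintype n] (M : Matrix n n ℝ) : Prop :=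
  ∃ (m : ℕ) (B : Matrix n (Fin m) ℝ), (∀ i j, 0 ≤ B i j) ∧ M = B * Bᵀ

open Finset

section LinearAlgebra

variable {ι κ μ : Type*}

theorem eq_smul_of_dotProduct_eq [Fintype κ] {u v : κ → ℝ} {a : ℝ} (hv : v ⬝ᵥ v = 1)
    (huv : u ⬝ᵥ v = a) (huu : u ⬝ᵥ u = a * a) : u = a • v := by
  rw [← sub_eq_zero, ← dotProduct_self_eq_zero]
  simp only [sub_dotProduct, dotProduct_sub, dotProduct_smul, smul_dotProduct, smul_eq_mul,
    dotProduct_comm v u, huv, huu, hv]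
  ring

theorem mul_eq_vecMulVec_of_diag [Fintype κ] {C : Matrix μ κ ℝ} {β : κ → ℝ} {g : μ → ℝ}
    (hβ : β ⬝ᵥ β = 1) (hCβ : C *ᵥ β = g) (hdiag : ∀ j, (C * Cᵀ) j j = g j * g j) :
    C = vecMulVec g β := by
  ext j k
  simpa [vecMulVec_apply] using
    congrFun (eq_smul_of_dotProduct_eq hβ (congrFun hCβ j) (hdiag j)) k

theorem mulVec_transpose_apply_of_mul_eq_vecMulVec [Fintype ι] {F : Matrix μ ι ℝ}
    {B : Matrix ι κ ℝ} {g : μ → ℝ} {β : κ → ℝ} (h : F * B = vecMulVec g β) (k : κ) :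
    F *ᵥ Bᵀ k = β k • g := by
  change (F * B)ᵀ k = _
  ext j
  simp [h, vecMulVec_apply, mul_comm]

theorem fromRows_mul_transpose_fromRows [Fintype κ] (B : Matrix ι κ ℝ) (β : κ → ℝ) :
    fromRows B (replicateRow Unit β) * (fromRows B (replicateRow Unit β))ᵀ =
      fromBlocks (B * Bᵀ) (replicateCol Unit (B *ᵥ β)) (replicateRow Unit (B *ᵥ β))
        (of fun _ _ => β ⬝ᵥ β) := by
  rw [transpose_fromRows, fromRows_mul_fromCols, transpose_replicateRow, replicateCol_mulVec,
    replicateRow_mulVec, transpose_mul, transpose_replicateCol, replicateRow_mul_replicateCol]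

theorem eq_mul_transpose_of_fromBlocks_eq [Fintype κ] {Ω : Matrix ι ι ℝ} {ξ : ι → ℝ}
    (B : Matrix (ι ⊕ Unit) κ ℝ)
    (h : fromBlocks Ω (replicateCol Unit ξ) (replicateRow Unit ξ) 1 = B * Bᵀ) :
    Ω = B.toRows₁ * B.toRows₁ᵀ ∧ ξ = B.toRows₁ *ᵥ B (.inr ()) ∧
      B (.inr ()) ⬝ᵥ B (.inr ()) = 1 := by
  have hrow : B.toRows₂ = replicateRow Unit (B (.inr ())) := by ext; rfl
  rw [← fromRows_toRows B, hrow, fromRows_mul_transpose_fromRows, fromBlocks_inj,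
    replicateCol_inj] at h
  exact ⟨h.1, h.2.1, (congrFun (congrFun h.2.2.2 ()) ()).symm⟩

theorem isCompletelyPositive_fromBlocks_vecMulVec [Fintype ι] {ξ : ι → ℝ} (hξ : 0 ≤ ξ) :
    IsCompletelyPositive
      (fromBlocks (vecMulVec ξ ξ) (replicateCol Unit ξ) (replicateRow Unit ξ) 1) := by
  refine ⟨1, fromRows (replicateCol (Fin 1) ξ) (replicateRow Unit 1), ?_, ?_⟩
  · rintro (i | i) j
    exacts [hξ i, zero_le_one]
  · rw [fromRows_mul_transpose_fromRows]
    congr 1 <;> ext <;> simp [vecMulVec_apply, mul_apply, mulVec, dotProduct]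

theorem trace_vecMulVec_mul [Fintype ι] (x : ι → ℝ) (Q : Matrix ι ι ℝ) :
    (vecMulVec x x * Q).trace = x ⬝ᵥ Q *ᵥ x := by
  rw [vecMulVec_mul, trace_vecMulVec, dotProduct_comm, ← dotProduct_mulVec]

theorem mul_vecMulVec_mul_transpose [Fintype ι] (F : Matrix μ ι ℝ) (x y : ι → ℝ) :
    F * vecMulVec x y * Fᵀ = vecMulVec (F *ᵥ x) (F *ᵥ y) := by
  rw [mul_vecMulVec, vecMulVec_mul, vecMul_transpose]

end LinearAlgebra

section Real

variable {κ : Type*} [Fintype κ]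

theorem exists_sum_mul_le_of_sum_eq_one {w v : κ → ℝ} (hw : ∀ k, 0 ≤ w k) (hsum : ∑ k, w k = 1) :
    ∃ k, w k ≠ 0 ∧ ∑ j, w j * v j ≤ v k := by
  by_contra! h
  obtain ⟨k₀, hk₀⟩ : ∃ k, w k ≠ 0 := by
    by_contra! h₀
    simp [h₀] at hsum
  have hlt : ∑ j, w j * v j < ∑ j, w j * ∑ i, w i * v i := by
    refine sum_lt_sum (fun j _ => ?_) ⟨k₀, mem_univ _, ?_⟩
    · by_cases hj : w j = 0
      · simp [hj]
      · exact mul_le_mul_of_nonneg_left (h j hj).le (hw j)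
    · exact mul_lt_mul_of_pos_left (h k₀ hk₀) ((hw k₀).lt_of_ne' hk₀)
  rw [← sum_mul, hsum, one_mul] at hlt
  exact lt_irrefl _ hlt

theorem eq_zero_or_eq_of_sum_mul_sub_eq_zero {a c : κ → ℝ} (ha : ∀ k, 0 ≤ a k)
    (hac : ∀ k, a k ≤ c k) (hsum : ∑ k, a k * (c k - a k) = 0) (k : κ) :
    a k = 0 ∨ a k = c k := by
  have hk := (sum_eq_zero_iff_of_nonneg fun j _ => mul_nonneg (ha j) (sub_nonneg.2 (hac j))).1
    hsum k (mem_univ k)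
  rcases mul_eq_zero.1 hk with h | h
  · exact Or.inl h
  · exact Or.inr (sub_eq_zero.1 h).symm

theorem exists_lt_quadratic {a b c : ℝ} (hc : 0 < c) (M : ℝ) :
    ∃ t ≥ 0, M < a + b * t + c * t ^ 2 := by
  set t := (|a| + |b| + |M| + 1) / c + 1
  have ht : 1 ≤ t := le_add_of_nonneg_left (by positivity)
  have hct : |a| + |b| + |M| + 1 ≤ c * t := by
    have : c * ((|a| + |b| + |M| + 1) / c) = |a| + |b| + |M| + 1 := by field_simp
    nlinarith
  refine ⟨t, by linarith, ?_⟩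
  nlinarith [le_abs_self a, neg_abs_le a, neg_abs_le b, le_abs_self M, abs_nonneg a,
    abs_nonneg b, abs_nonneg M]

end Real

section MixedBinaryProgram

variable {ι κ μ : Type*} [Fintype ι]

def quadObjective (Q : Matrix ι ι ℝ) (r x : ι → ℝ) : ℝ := x ⬝ᵥ Q *ᵥ x + r ⬝ᵥ x

def IsMixedBinaryFeasible (F : Matrix μ ι ℝ) (g : μ → ℝ) (L : Set ι) (x : ι → ℝ) : Prop :=
  0 ≤ x ∧ F *ᵥ x = g ∧ ∀ ℓ ∈ L, x ℓ = 0 ∨ x ℓ = 1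

theorem quadObjective_add_smul (Q : Matrix ι ι ℝ) (r x d : ι → ℝ) (t : ℝ) :
    quadObjective Q r (x + t • d) = quadObjective Q r x +
      (x ⬝ᵥ Q *ᵥ d + d ⬝ᵥ Q *ᵥ x + r ⬝ᵥ d) * t + (d ⬝ᵥ Q *ᵥ d) * t ^ 2 := by
  simp only [quadObjective, mulVec_add, mulVec_smul, dotProduct_add, add_dotProduct,
    dotProduct_smul, smul_dotProduct, smul_eq_mul]
  ring

theorem sq_mul_quadObjective_inv_smul (Q : Matrix ι ι ℝ) (r b : ι → ℝ) {c : ℝ} (hc : c ≠ 0) :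
    c ^ 2 * quadObjective Q r (c⁻¹ • b) = b ⬝ᵥ Q *ᵥ b + c * (r ⬝ᵥ b) := by
  simp only [quadObjective, mulVec_smul, dotProduct_smul, smul_dotProduct, smul_eq_mul]
  field_simp

theorem trace_mul_add_dotProduct_mulVec [Fintype κ] (B : Matrix ι κ ℝ) (β : κ → ℝ)
    (Q : Matrix ι ι ℝ) (r : ι → ℝ) :
    (B * Bᵀ * Q).trace + r ⬝ᵥ (B *ᵥ β) = ∑ k, (Bᵀ k ⬝ᵥ Q *ᵥ Bᵀ k + β k * (r ⬝ᵥ Bᵀ k)) := by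
  rw [sum_add_distrib, trace_mul_comm, ← Matrix.mul_assoc, trace_mul_comm, dotProduct_mulVec]
  -- the trace terms agree definitionally
  congr 1
  exact sum_congr rfl fun k _ => mul_comm _ _

variable {F : Matrix μ ι ℝ} {g : μ → ℝ} {L : Set ι}

theorem IsMixedBinaryFeasible.add_smul {x d : ι → ℝ} (hx : IsMixedBinaryFeasible F g L x)
    (hd : 0 ≤ d) (hFd : F *ᵥ d = 0) (hdL : ∀ ℓ ∈ L, d ℓ = 0) {t : ℝ} (ht : 0 ≤ t) :
    IsMixedBinaryFeasible F g L (x + t • d) := by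
  obtain ⟨hx₀, hFx, hxL⟩ := hx
  refine ⟨add_nonneg hx₀ (smul_nonneg ht hd), ?_, fun ℓ hℓ => ?_⟩
  · rw [mulVec_add, mulVec_smul, hFx, hFd, smul_zero, add_zero]
  · simpa [hdL ℓ hℓ] using hxL ℓ hℓ

theorem exists_isMixedBinaryFeasible_lt_quadObjective {x d : ι → ℝ}
    (hx : IsMixedBinaryFeasible F g L x) (hd : 0 ≤ d) (hFd : F *ᵥ d = 0)
    (hdL : ∀ ℓ ∈ L, d ℓ = 0) {Q : Matrix ι ι ℝ} (hQd : 0 < d ⬝ᵥ Q *ᵥ d) (r : ι → ℝ) (M : ℝ) :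
    ∃ y, IsMixedBinaryFeasible F g L y ∧ M < quadObjective Q r y := by
  obtain ⟨t, ht, hM⟩ := exists_lt_quadratic (a := quadObjective Q r x)
    (b := x ⬝ᵥ Q *ᵥ d + d ⬝ᵥ Q *ᵥ x + r ⬝ᵥ d) hQd M
  exact ⟨x + t • d, hx.add_smul hd hFd hdL ht, by rwa [quadObjective_add_smul]⟩

theorem apply_eq_zero_of_mulVec_eq_zero
    (hbound : ∀ x : ι → ℝ, 0 ≤ x → F *ᵥ x = g → ∀ ℓ ∈ L, x ℓ ≤ 1)
    {x d : ι → ℝ} (hx : 0 ≤ x) (hFx : F *ᵥ x = g) (hd : 0 ≤ d) (hFd : F *ᵥ d = 0) {ℓ : ι}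
    (hℓ : ℓ ∈ L) : d ℓ = 0 := by
  by_contra hne
  have h := hbound (x + (2 / d ℓ) • d)
    (add_nonneg hx (smul_nonneg (div_nonneg zero_le_two (hd ℓ)) hd))
    (by rw [mulVec_add, mulVec_smul, hFx, hFd, smul_zero, add_zero]) ℓ hℓ
  simp only [Pi.add_apply, Pi.smul_apply, smul_eq_mul, div_mul_cancel₀ _ hne] at h
  linarith [show 0 ≤ x ℓ from hx ℓ]

theorem apply_le_of_mulVec_eq_smul (hbound : ∀ x : ι → ℝ, 0 ≤ x → F *ᵥ x = g → ∀ ℓ ∈ L, x ℓ ≤ 1)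
    {x b : ι → ℝ} {c : ℝ} (hx : 0 ≤ x) (hFx : F *ᵥ x = g) (hb : 0 ≤ b) (hc : 0 ≤ c)
    (hFb : F *ᵥ b = c • g) {ℓ : ι} (hℓ : ℓ ∈ L) : b ℓ ≤ c := by
  rcases hc.eq_or_lt with rfl | hc
  · rw [zero_smul] at hFb
    exact (apply_eq_zero_of_mulVec_eq_zero hbound hx hFx hb hFb hℓ).le
  · have h := hbound (c⁻¹ • b) (smul_nonneg (inv_nonneg.2 hc.le) hb)
      (by rw [mulVec_smul, hFb, smul_smul, inv_mul_cancel₀ hc.ne', one_smul]) ℓ hℓ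
    rwa [Pi.smul_apply, smul_eq_mul, inv_mul_le_iff₀ hc, mul_one] at h

theorem eq_zero_or_eq_of_factorization [Fintype κ]
    (hbound : ∀ x : ι → ℝ, 0 ≤ x → F *ᵥ x = g → ∀ ℓ ∈ L, x ℓ ≤ 1)
    {x : ι → ℝ} (hx : 0 ≤ x) (hFx : F *ᵥ x = g) {B : Matrix ι κ ℝ} {β : κ → ℝ}
    (hB : ∀ i k, 0 ≤ B i k) (hβ : 0 ≤ β) (hFB : F * B = vecMulVec g β)
    (hL : ∀ ℓ ∈ L, (B *ᵥ β) ℓ = (B * Bᵀ) ℓ ℓ) : ∀ ℓ ∈ L, ∀ k, B ℓ k = 0 ∨ B ℓ k = β k := by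
  intro ℓ hℓ k
  refine eq_zero_or_eq_of_sum_mul_sub_eq_zero (fun k => hB ℓ k) (fun k => ?_) ?_ k
  · exact apply_le_of_mulVec_eq_smul hbound hx hFx (fun i => hB i k) (hβ k)
      (mulVec_transpose_apply_of_mul_eq_vecMulVec hFB k) hℓ
  · simp only [mul_sub, sum_sub_distrib]
    exact sub_eq_zero.2 (hL ℓ hℓ)

theorem exists_isMixedBinaryFeasible_le_of_factorization [Fintype κ]
    (hbound : ∀ x : ι → ℝ, 0 ≤ x → F *ᵥ x = g → ∀ ℓ ∈ L, x ℓ ≤ 1)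
    {B : Matrix ι κ ℝ} {β : κ → ℝ} (hB : ∀ i k, 0 ≤ B i k) (hβ : 0 ≤ β) (hβ₁ : β ⬝ᵥ β = 1)
    (hFB : F * B = vecMulVec g β) (hL : ∀ ℓ ∈ L, (B *ᵥ β) ℓ = (B * Bᵀ) ℓ ℓ)
    (Q : Matrix ι ι ℝ) (r : ι → ℝ) :
    ∃ x, IsMixedBinaryFeasible F g L x ∧
      (B * Bᵀ * Q).trace + r ⬝ᵥ (B *ᵥ β) ≤ quadObjective Q r x := by
  have hFcol := mulVec_transpose_apply_of_mul_eq_vecMulVec hFB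
  have hcol : ∀ k, β k ≠ 0 → 0 ≤ (β k)⁻¹ • Bᵀ k ∧ F *ᵥ ((β k)⁻¹ • Bᵀ k) = g := fun k hk =>
    ⟨smul_nonneg (inv_nonneg.2 (hβ k)) fun i => hB i k,
      by rw [mulVec_smul, hFcol, smul_smul, inv_mul_cancel₀ hk, one_smul]⟩
  obtain ⟨k₀, hk₀, hmax⟩ := exists_sum_mul_le_of_sum_eq_one (fun k => sq_nonneg (β k))
    (by simpa [sq, dotProduct] using hβ₁) (v := fun k => quadObjective Q r ((β k)⁻¹ • Bᵀ k))
  have hk₀ : β k₀ ≠ 0 := pow_ne_zero_iff two_ne_zero |>.1 hk₀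
  have hbin :=
    eq_zero_or_eq_of_factorization hbound (hcol k₀ hk₀).1 (hcol k₀ hk₀).2 hB hβ hFB hL
  have hfeas : ∀ k, β k ≠ 0 → IsMixedBinaryFeasible F g L ((β k)⁻¹ • Bᵀ k) := fun k hk =>
    ⟨(hcol k hk).1, (hcol k hk).2, fun ℓ hℓ => by rcases hbin ℓ hℓ k with h | h <;> simp [h, hk]⟩
  rw [trace_mul_add_dotProduct_mulVec]
  by_cases hrec : ∃ k, β k = 0 ∧ 0 < Bᵀ k ⬝ᵥ Q *ᵥ Bᵀ k
  · obtain ⟨k, hk, hQk⟩ := hrec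
    obtain ⟨y, hy, hlt⟩ := exists_isMixedBinaryFeasible_lt_quadObjective (hfeas k₀ hk₀)
      (d := Bᵀ k) (fun i => hB i k) (by rw [hFcol, hk, zero_smul])
      (fun ℓ hℓ => by simpa [hk] using hbin ℓ hℓ k) hQk r _
    exact ⟨y, hy, hlt.le⟩
  · push Not at hrec
    refine ⟨_, hfeas k₀ hk₀, le_trans (sum_le_sum fun k _ => ?_) hmax⟩
    by_cases hk : β k = 0
    · simpa [hk] using hrec k hk
    · rw [sq_mul_quadObjective_inv_smul Q r _ hk]

end MixedBinaryProgram

theorem burer_completely_positive_reformulation_general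
    (P m : ℕ) (Q : Matrix (Fin P) (Fin P) ℝ)
    (r : Fin P → ℝ) (F : Matrix (Fin m) (Fin P) ℝ) (g : Fin m → ℝ)
    (L : Set (Fin P))
    (hbound : ∀ ξ : Fin P → ℝ, (∀ i, 0 ≤ ξ i) → F.mulVec ξ = g → ∀ ℓ ∈ L, ξ ℓ ≤ 1) :
    sSup {z : EReal | ∃ ξ : Fin P → ℝ, (∀ i, 0 ≤ ξ i) ∧ F.mulVec ξ = g ∧
        (∀ ℓ ∈ L, ξ ℓ = 0 ∨ ξ ℓ = 1) ∧
        z = ((ξ ⬝ᵥ Q.mulVec ξ + r ⬝ᵥ ξ : ℝ) : EReal)} =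
    sSup {z : EReal | ∃ (ξ : Fin P → ℝ) (Ω : Matrix (Fin P) (Fin P) ℝ),
        (∀ i, 0 ≤ ξ i) ∧ Ω.PosSemidef ∧ F.mulVec ξ = g ∧
        (∀ j, (F * Ω * Fᵀ) j j = g j * g j) ∧
        (∀ ℓ ∈ L, ξ ℓ = Ω ℓ ℓ) ∧
        IsCompletelyPositive
          (fromBlocks Ω (of fun i (_ : Unit) => ξ i) (of fun (_ : Unit) j => ξ j) 1) ∧
        z = (((Ω * Q).trace + r ⬝ᵥ ξ : ℝ) : EReal)} := by
  apply le_antisymm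
  · refine sSup_le_sSup ?_
    rintro z ⟨ξ, hξ, hFξ, hξL, rfl⟩
    refine ⟨ξ, vecMulVec ξ ξ, hξ, by simpa using posSemidef_vecMulVec_self_star ξ, hFξ,
      fun j => by rw [mul_vecMulVec_mul_transpose, hFξ, vecMulVec_apply], fun ℓ hℓ => ?_,
      isCompletelyPositive_fromBlocks_vecMulVec hξ, by rw [trace_vecMulVec_mul]⟩
    rcases hξL ℓ hℓ with h | h <;> simp [vecMulVec_apply, h]
  · refine sSup_le ?_
    rintro z ⟨ξ, Ω, hξ, -, hFξ, hdiag, hL, ⟨n, B, hB, hfac⟩, rfl⟩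
    obtain ⟨rfl, rfl, hβ₁⟩ := eq_mul_transpose_of_fromBlocks_eq B hfac
    have hFB : F * B.toRows₁ = vecMulVec g (B (.inr ())) :=
      mul_eq_vecMulVec_of_diag hβ₁ (by rw [← mulVec_mulVec, hFξ])
        (by simpa only [transpose_mul, Matrix.mul_assoc] using hdiag)
    obtain ⟨x, hx, hle⟩ := exists_isMixedBinaryFeasible_le_of_factorization hbound
      (fun i k => hB _ k) (fun k => hB _ k) hβ₁ hFB hL Q r
    exact le_sSup_of_le ⟨x, hx.1, hx.2.1, hx.2.2, rfl⟩ (EReal.coe_le_coe_iff.2 hle)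

/-- Burer's theorem: the mixed-binary quadratic program equals its completely positive
reformulation (values taken in the extended reals). -/
theorem burer_completely_positive_reformulation
    (P m : ℕ) (Q : Matrix (Fin P) (Fin P) ℝ) (hQ : Qᵀ = Q)
    (r : Fin P → ℝ) (F : Matrix (Fin m) (Fin P) ℝ) (g : Fin m → ℝ)
    (L : Set (Fin P))
    (hbound : ∀ ξ : Fin P → ℝ, (∀ i, 0 ≤ ξ i) → F.mulVec ξ = g → ∀ ℓ ∈ L, ξ ℓ ≤ 1) :
    sSup {z : EReal | ∃ ξ : Fin P → ℝ, (∀ i, 0 ≤ ξ i) ∧ F.mulVec ξ = g ∧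
        (∀ ℓ ∈ L, ξ ℓ = 0 ∨ ξ ℓ = 1) ∧
        z = ((ξ ⬝ᵥ Q.mulVec ξ + r ⬝ᵥ ξ : ℝ) : EReal)} =
    sSup {z : EReal | ∃ (ξ : Fin P → ℝ) (Ω : Matrix (Fin P) (Fin P) ℝ),
        (∀ i, 0 ≤ ξ i) ∧ Ω.PosSemidef ∧ F.mulVec ξ = g ∧
        (∀ j, (F * Ω * Fᵀ) j j = g j * g j) ∧
        (∀ ℓ ∈ L, ξ ℓ = Ω ℓ ℓ) ∧
        IsCompletelyPositive
          (fromBlocks Ω (of fun i (_ : Unit) => ξ i) (of fun (_ : Unit) j => ξ j) 1) ∧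
        z = (((Ω * Q).trace + r ⬝ᵥ ξ : ℝ) : EReal)} :=
  burer_completely_positive_reformulation_general P m Q r F g L hbound
end

section
/- Let S ∈ ℝ^{J×K}, t ∈ ℝ^J, A ∈ ℝ^{M×K}, b ∈ ℝ^K, L ≤ K, and let τ ∈ ℝ, ψ, φ ∈ ℝ^J, γ ∈ ℝ^L. Let γ̃ ∈ ℝ^K be the vector with γ̃_ℓ = γ_ℓ for ℓ ∈ {1,…,L} and γ̃_ℓ = 0 otherwise. If the (K+1)×(K+1) block matrix [[Sᵀ diag(φ) S − AᵀA − diag(γ̃), ½(Sᵀψ − b + γ̃)], [½(Sᵀψ − b + γ̃)ᵀ, τ]] is copositive, then every ξ ∈ ℝ^K with ξ ≥ 0, Sξ = t, and ξ_ℓ ∈ {0,1} for all ℓ ∈ {1,…,L} satisfies ‖Aξ‖² + bᵀξ ≤ tᵀψ + (t∘t)ᵀφ + τ. -/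
open Matrix

/-- A symmetric matrix `M` is copositive if `ξᵀ M ξ ≥ 0` for all entrywise nonnegative `ξ`. -/
def IsCopositive {n : Type*} [Fintype n] (M : Matrix n n ℝ) : Prop :=
  ∀ ξ : n → ℝ, (∀ i, 0 ≤ ξ i) → 0 ≤ ξ ⬝ᵥ M.mulVec ξ

/-!
Evaluating the quadratic form of the copositive bordered matrix at the nonnegative vector
`(ξ, 1)` gives `ξᵀ Q ξ + cᵀ ξ + τ ≥ 0`. For a feasible `ξ` we have `Sξ = t`, so
`ξᵀ Sᵀ diag(φ) S ξ = (t∘t)ᵀ φ` and `ψᵀ S ξ = tᵀ ψ`, while the binary constraints give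
`ξ_ℓ² = ξ_ℓ` wherever `γ̃_ℓ ≠ 0`, so the two `γ̃`-terms cancel; what remains is the claim.
-/

namespace Matrix

variable {m n R : Type*} [Fintype m] [Fintype n] [CommSemiring R]

theorem dotProduct_transpose_mul_mul_mulVec (B : Matrix m n R) (D : Matrix m m R) (x : n → R) :
    x ⬝ᵥ (Bᵀ * D * B) *ᵥ x = B *ᵥ x ⬝ᵥ D *ᵥ (B *ᵥ x) := by
  rw [← mulVec_mulVec, ← mulVec_mulVec, dotProduct_mulVec, vecMul_transpose]

theorem dotProduct_transpose_mul_self_mulVec (B : Matrix m n R) (x : n → R) :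
    x ⬝ᵥ (Bᵀ * B) *ᵥ x = B *ᵥ x ⬝ᵥ B *ᵥ x := by
  rw [← mulVec_mulVec, dotProduct_mulVec, vecMul_transpose]

theorem dotProduct_diagonal_mulVec [DecidableEq n] (d x : n → R) :
    x ⬝ᵥ diagonal d *ᵥ x = (x * x) ⬝ᵥ d := by
  simp only [dotProduct, mulVec_diagonal, Pi.mul_apply]
  exact Finset.sum_congr rfl fun i _ => by ring

theorem dotProduct_diagonal_mulVec_of_binary [DecidableEq n] {d x : n → R}
    (hx : ∀ i, d i ≠ 0 → x i = 0 ∨ x i = 1) :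
    x ⬝ᵥ diagonal d *ᵥ x = x ⬝ᵥ d := by
  rw [dotProduct_diagonal_mulVec]
  refine Finset.sum_congr rfl fun i _ => ?_
  by_cases hd : d i = 0
  · simp [hd]
  · rcases hx i hd with h | h <;> simp [h]

theorem sumElim_one_dotProduct_fromBlocks_mulVec (Q : Matrix n n ℝ) (c x : n → ℝ) (τ : ℝ) :
    Sum.elim x 1 ⬝ᵥ
        fromBlocks Q (of fun i (_ : Unit) => c i / 2) (of fun (_ : Unit) j => c j / 2)
          (of fun _ _ => τ) *ᵥ Sum.elim x 1 =
      x ⬝ᵥ Q *ᵥ x + c ⬝ᵥ x + τ := by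
  have hcol : (of fun i (_ : Unit) => c i / 2) *ᵥ 1 = (2⁻¹ : ℝ) • c := by
    ext i; simp [mulVec, div_eq_mul_inv, mul_comm]
  have hrow : (of fun (_ : Unit) j => c j / 2) *ᵥ x = fun _ => 2⁻¹ * (c ⬝ᵥ x) := by
    ext; simp only [mulVec, dotProduct, of_apply, Finset.mul_sum]
    exact Finset.sum_congr rfl fun _ _ => by ring
  rw [fromBlocks_mulVec, sumElim_dotProduct_sumElim]
  simp only [Sum.elim_comp_inl, Sum.elim_comp_inr, hcol, hrow, dotProduct_add, dotProduct_smul,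
    dotProduct_comm x c]
  simp [mulVec, dotProduct]
  ring

end Matrix

theorem IsCopositive.dotProduct_mulVec_add_dotProduct_add_nonneg {n : Type*} [Fintype n]
    {Q : Matrix n n ℝ} {c : n → ℝ} {τ : ℝ}
    (h : IsCopositive (fromBlocks Q (of fun i (_ : Unit) => c i / 2)
      (of fun (_ : Unit) j => c j / 2) (of fun _ _ => τ)))
    {x : n → ℝ} (hx : ∀ i, 0 ≤ x i) :
    0 ≤ x ⬝ᵥ Q *ᵥ x + c ⬝ᵥ x + τ := by
  rw [← sumElim_one_dotProduct_fromBlocks_mulVec]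
  exact h _ fun | .inl i => hx i | .inr _ => zero_le_one

theorem copositive_weak_duality_general
    (J K M L : ℕ)
    (S : Matrix (Fin J) (Fin K) ℝ) (t : Fin J → ℝ)
    (A : Matrix (Fin M) (Fin K) ℝ) (b : Fin K → ℝ)
    (τ : ℝ) (ψ φ : Fin J → ℝ) (γ : Fin L → ℝ)
    (γt : Fin K → ℝ)
    (hγt : ∀ ℓ : Fin K, γt ℓ = if h : (ℓ : ℕ) < L then γ ⟨ℓ, h⟩ else 0)
    (hcop : IsCopositive
      (fromBlocks
        (Sᵀ * diagonal φ * S - Aᵀ * A - diagonal γt)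
        (of fun i (_ : Unit) => (Sᵀ.mulVec ψ i - b i + γt i) / 2)
        (of fun (_ : Unit) j => (Sᵀ.mulVec ψ j - b j + γt j) / 2)
        (of fun (_ : Unit) (_ : Unit) => τ))) :
    ∀ ξ : Fin K → ℝ, (∀ i, 0 ≤ ξ i) → S.mulVec ξ = t →
      (∀ ℓ : Fin K, (ℓ : ℕ) < L → ξ ℓ = 0 ∨ ξ ℓ = 1) →
      A.mulVec ξ ⬝ᵥ A.mulVec ξ + b ⬝ᵥ ξ ≤
        t ⬝ᵥ ψ + (fun j => t j * t j) ⬝ᵥ φ + τ := by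
  intro ξ hξ hSξ hbin
  have hbinary : ∀ ℓ, γt ℓ ≠ 0 → ξ ℓ = 0 ∨ ξ ℓ = 1 := fun ℓ hℓ =>
    hbin ℓ <| by_contra fun h => hℓ (by rw [hγt ℓ, dif_neg h])
  have hquad : ξ ⬝ᵥ (Sᵀ * diagonal φ * S - Aᵀ * A - diagonal γt) *ᵥ ξ =
      (fun j => t j * t j) ⬝ᵥ φ - A *ᵥ ξ ⬝ᵥ A *ᵥ ξ - ξ ⬝ᵥ γt := by
    rw [sub_mulVec, sub_mulVec, dotProduct_sub, dotProduct_sub,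
      dotProduct_transpose_mul_mul_mulVec, dotProduct_transpose_mul_self_mulVec,
      dotProduct_diagonal_mulVec, dotProduct_diagonal_mulVec_of_binary hbinary, hSξ]
    rfl
  have hlin : (fun i => (Sᵀ *ᵥ ψ) i - b i + γt i) ⬝ᵥ ξ = t ⬝ᵥ ψ - b ⬝ᵥ ξ + ξ ⬝ᵥ γt := by
    rw [show (fun i => (Sᵀ *ᵥ ψ) i - b i + γt i) = Sᵀ *ᵥ ψ - b + γt from rfl, add_dotProduct,
      sub_dotProduct, mulVec_transpose, ← dotProduct_mulVec, hSξ, dotProduct_comm ξ,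
      dotProduct_comm t]
  linarith [hcop.dotProduct_mulVec_add_dotProduct_add_nonneg hξ]

/-- Weak duality: a copositive-feasible dual solution upper-bounds the mixed-binary
quadratic objective. -/
theorem copositive_weak_duality
    (J K M L : ℕ) (hL : L ≤ K)
    (S : Matrix (Fin J) (Fin K) ℝ) (t : Fin J → ℝ)
    (A : Matrix (Fin M) (Fin K) ℝ) (b : Fin K → ℝ)
    (τ : ℝ) (ψ φ : Fin J → ℝ) (γ : Fin L → ℝ)
    (γt : Fin K → ℝ)
    (hγt : ∀ ℓ : Fin K, γt ℓ = if h : (ℓ : ℕ) < L then γ ⟨ℓ, h⟩ else 0)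
    (hcop : IsCopositive
      (fromBlocks
        (Sᵀ * diagonal φ * S - Aᵀ * A - diagonal γt)
        (of fun i (_ : Unit) => (Sᵀ.mulVec ψ i - b i + γt i) / 2)
        (of fun (_ : Unit) j => (Sᵀ.mulVec ψ j - b j + γt j) / 2)
        (of fun (_ : Unit) (_ : Unit) => τ))) :
    ∀ ξ : Fin K → ℝ, (∀ i, 0 ≤ ξ i) → S.mulVec ξ = t →
      (∀ ℓ : Fin K, (ℓ : ℕ) < L → ξ ℓ = 0 ∨ ξ ℓ = 1) →
      A.mulVec ξ ⬝ᵥ A.mulVec ξ + b ⬝ᵥ ξ ≤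
        t ⬝ᵥ ψ + (fun j => t j * t j) ⬝ᵥ φ + τ :=
  copositive_weak_duality_general J K M L S t A b τ ψ φ γ γt hγt hcop
end

section
/- Let P ∈ ℝ^{p×p} be symmetric positive definite, Q ∈ ℝ^{p×q}, and R ∈ ℝ^{q×q} symmetric, and consider the symmetric block matrix M = [[P, Q],[Qᵀ, R]]. If R − QᵀP⁻¹Q is strictly copositive, then M is strictly copositive. -/
/-! Completing the square, `ξᵀ M ξ = vᵀ P v + yᵀ (R - Qᵀ P⁻¹ Q) y` with `ξ = (x, y)`
and `v = x + P⁻¹ Q y`. For nonnegative `ξ ≠ 0`, either `y ≠ 0`, and the second term is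
positive by copositivity of the Schur complement, or `y = 0`, and then `v = x ≠ 0` makes the
first term positive. -/

open Matrix

/-- A symmetric matrix `M` is strictly copositive if `ξᵀ M ξ > 0` for all entrywise
nonnegative `ξ ≠ 0`. -/
def IsStrictCopositive {n : Type*} [Fintype n] (M : Matrix n n ℝ) : Prop :=
  ∀ ξ : n → ℝ, (∀ i, 0 ≤ ξ i) → ξ ≠ 0 → 0 < ξ ⬝ᵥ M.mulVec ξ

variable {m n : Type*} [Fintype m] [Fintype n] [DecidableEq m]

theorem dotProduct_fromBlocks_mulVec_sumElim {P : Matrix m m ℝ} (hP : P.IsHermitian)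
    [Invertible P] (Q : Matrix m n ℝ) (R : Matrix n n ℝ) (x : m → ℝ) (y : n → ℝ) :
    (x ⊕ᵥ y) ⬝ᵥ fromBlocks P Q Qᵀ R *ᵥ (x ⊕ᵥ y) =
      (x + (P⁻¹ * Q) *ᵥ y) ⬝ᵥ P *ᵥ (x + (P⁻¹ * Q) *ᵥ y) +
        y ⬝ᵥ (R - Qᵀ * P⁻¹ * Q) *ᵥ y := by
  simpa [dotProduct_mulVec, conjTranspose_eq_transpose_of_trivial] using
    schur_complement_eq₁₁ Q R x y hP

theorem IsStrictCopositive.fromBlocks_of_posDef {P : Matrix m m ℝ} (hP : P.PosDef)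
    (Q : Matrix m n ℝ) {R : Matrix n n ℝ} (h : IsStrictCopositive (R - Qᵀ * P⁻¹ * Q)) :
    IsStrictCopositive (fromBlocks P Q Qᵀ R) := by
  intro ξ hξ hξ0
  have : Invertible P := hP.isUnit.invertible
  rw [← Sum.elim_comp_inl_inr ξ, dotProduct_fromBlocks_mulVec_sumElim hP.isHermitian]
  by_cases hy : ξ ∘ Sum.inr = 0
  · have hx : ξ ∘ Sum.inl ≠ 0 := fun hx ↦
      hξ0 (by rw [← Sum.elim_comp_inl_inr ξ, hx, hy, Sum.elim_zero_zero])
    simpa [hy] using hP.dotProduct_mulVec_pos hx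
  · have hsquare :=
      hP.posSemidef.dotProduct_mulVec_nonneg (ξ ∘ Sum.inl + (P⁻¹ * Q) *ᵥ ξ ∘ Sum.inr)
    rw [star_trivial] at hsquare
    exact add_pos_of_nonneg_of_pos hsquare (h _ (fun i ↦ hξ _) hy)

theorem copositive_schur_complement_general
    (p q : ℕ)
    (P : Matrix (Fin p) (Fin p) ℝ) (hP : P.PosDef)
    (Q : Matrix (Fin p) (Fin q) ℝ)
    (R : Matrix (Fin q) (Fin q) ℝ)
    (h : IsStrictCopositive (R - Qᵀ * P⁻¹ * Q)) :
    IsStrictCopositive (fromBlocks P Q Qᵀ R) :=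
  IsStrictCopositive.fromBlocks_of_posDef hP Q h

/-- Copositive Schur complements: if `P ≻ 0` and `R − Qᵀ P⁻¹ Q` is strictly copositive,
then the block matrix `[[P, Q], [Qᵀ, R]]` is strictly copositive. -/
theorem copositive_schur_complement
    (p q : ℕ)
    (P : Matrix (Fin p) (Fin p) ℝ) (hP : P.PosDef)
    (Q : Matrix (Fin p) (Fin q) ℝ)
    (R : Matrix (Fin q) (Fin q) ℝ) (hR : Rᵀ = R)
    (h : IsStrictCopositive (R - Qᵀ * P⁻¹ * Q)) :
    IsStrictCopositive (fromBlocks P Q Qᵀ R) :=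
  copositive_schur_complement_general p q P hP Q R h
end

section
/- Let S ∈ ℝ^{J×K}, t ∈ ℝ^J, A ∈ ℝ^{M×K}, b ∈ ℝ^K, and L ≤ K. Assume: (i) the set Ξ_B = { ξ ∈ ℝ^K : ξ ≥ 0, Sξ = t, ξ_ℓ ∈ {0,1} for all ℓ ∈ {1,…,L} } is nonempty; (ii) the only ξ ≥ 0 with Sξ = 0 is ξ = 0; and (iii) every ξ ≥ 0 with Sξ = t satisfies ξ_ℓ ≤ 1 for all ℓ ∈ {1,…,L}. Then sup{ ‖Aξ‖² + bᵀξ : ξ ∈ Ξ_B } = inf{ tᵀψ + (t∘t)ᵀφ + τ : τ ∈ ℝ, ψ, φ ∈ ℝ^J, γ ∈ ℝ^L such that the (K+1)×(K+1) block matrix [[Sᵀ diag(φ) S − AᵀA − diag(γ̃), ½(Sᵀψ − b + γ̃)], [½(Sᵀψ − b + γ̃)ᵀ, τ]] is copositive }, where γ̃ ∈ ℝ^K has γ̃_ℓ = γ_ℓ for ℓ ∈ {1,…,L} and γ̃_ℓ = 0 otherwise. -/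
/-
Weak duality: testing copositivity of a dual matrix at `(ξ, 1)`, for `ξ` feasible, bounds the
objective at `ξ` by the dual value; binarity of `ξ` makes `γ̃ᵢ ξᵢ² = γ̃ᵢ ξᵢ`.

Conversely, let `c` exceed every primal value. For `ψ = -2ρt`, `φ ≡ ρ`, `γ ≡ σ` and
`τ = ρ‖t‖² + c` the dual value is `c`, and the quadratic form of the dual matrix at `(ξ, s)` is
`ρ ‖Sξ - st‖² + σ ∑_{ℓ < L} ξ_ℓ (s - ξ_ℓ) + c s² - ‖Aξ‖² - s bᵀξ`. Being homogeneous, it only has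
to be positive on the compact set of nonnegative unit vectors, and `σ`, then `ρ`, are chosen by
an exact-penalty argument on compact sets. Where `Sξ = st`, the recession hypothesis forces
`s > 0` and makes `ξ / s` feasible, so by (iii) the `σ`-term is nonnegative there and vanishes
only when `ξ / s` is binary, where `c s² - ‖Aξ‖² - s bᵀξ > 0`.
-/

open Matrix

theorem IsCompact.exists_forall_mul_add_pos {X : Type*} [TopologicalSpace X] {s : Set X}
    (hs : IsCompact s) {g q : X → ℝ} (hg : Continuous g) (hq : Continuous q)
    (hg0 : ∀ x ∈ s, 0 ≤ g x) (hq0 : ∀ x ∈ s, g x = 0 → 0 < q x) :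
    ∃ σ : ℝ, ∀ x ∈ s, 0 < σ * g x + q x := by
  by_cases hne : (s ∩ {x | q x ≤ 0}).Nonempty
  swap
  · refine ⟨0, fun x hx => ?_⟩
    rw [zero_mul, zero_add]
    exact not_le.1 fun hqx => hne ⟨x, hx, hqx⟩
  obtain ⟨m, ⟨hms, hqm⟩, hmin⟩ :=
    (hs.inter_right (isClosed_le hq continuous_const)).exists_isMinOn hne hg.continuousOn
  have hgm : 0 < g m := (hg0 m hms).lt_of_ne fun h => (hq0 m hms h.symm).not_ge hqm
  obtain ⟨c, hc⟩ := hs.bddBelow_image hq.continuousOn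
  have hqc : ∀ x ∈ s, c ≤ q x := fun x hx => hc ⟨x, hx, rfl⟩
  have hc0 : c ≤ 0 := (hqc m hms).trans hqm
  refine ⟨(1 - c) / g m, fun x hx => ?_⟩
  rcases le_or_gt (q x) 0 with hqx | hqx
  · have : 1 - c ≤ (1 - c) / g m * g x := by
      rw [div_mul_eq_mul_div, le_div_iff₀ hgm]
      exact mul_le_mul_of_nonneg_left (hmin ⟨hx, hqx⟩) (by linarith)
    linarith [hqc x hx]
  · have : 0 ≤ (1 - c) / g m * g x := mul_nonneg (div_nonneg (by linarith) hgm.le) (hg0 x hx)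
    linarith

theorem IsCopositive.of_forall_norm_eq_one {n : Type*} [Fintype n] {M : Matrix n n ℝ}
    (h : ∀ η : n → ℝ, 0 ≤ η → ‖η‖ = 1 → 0 ≤ η ⬝ᵥ M *ᵥ η) : IsCopositive M := by
  intro η hη
  rcases eq_or_ne η 0 with rfl | hne
  · simp
  have hpos : 0 < ‖η‖ := norm_pos_iff.2 hne
  have := h (‖η‖⁻¹ • η) (smul_nonneg (inv_nonneg.2 hpos.le) hη)
    (by rw [norm_smul, norm_inv, norm_norm, inv_mul_cancel₀ hpos.ne'])
  rw [mulVec_smul, dotProduct_smul, smul_dotProduct, smul_eq_mul, smul_eq_mul, ← mul_assoc] at this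
  exact nonneg_of_mul_nonneg_right this (by positivity)

section Penalty

variable {ι κ μ : Type*} [Fintype ι] [Fintype κ] [Fintype μ]
  (S : Matrix κ ι ℝ) (t : κ → ℝ) (A : Matrix μ ι ℝ) (b : ι → ℝ)

/- Homogenizations, in the extra coordinate `s`, of `‖Sξ - t‖²`, of `∑_{i ∈ B} ξᵢ (1 - ξᵢ)` and of
`c - (‖Aξ‖² + bᵀξ)`. -/
def eqPenalty (ξ : ι → ℝ) (s : ℝ) : ℝ := (S *ᵥ ξ - s • t) ⬝ᵥ (S *ᵥ ξ - s • t)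

def binPenalty (B : ι → Prop) [DecidablePred B] (ξ : ι → ℝ) (s : ℝ) : ℝ :=
  ∑ i, if B i then ξ i * (s - ξ i) else 0

def objGap (c : ℝ) (ξ : ι → ℝ) (s : ℝ) : ℝ := c * s ^ 2 - (A *ᵥ ξ ⬝ᵥ A *ᵥ ξ + s * b ⬝ᵥ ξ)

theorem binPenalty_smul (B : ι → Prop) [DecidablePred B] (y : ι → ℝ) (s : ℝ) :
    binPenalty B (s • y) s = s ^ 2 * binPenalty B y 1 := by
  simp only [binPenalty, Finset.mul_sum, Pi.smul_apply, smul_eq_mul]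
  exact Finset.sum_congr rfl fun i _ => by split_ifs <;> ring

theorem objGap_smul (c : ℝ) (y : ι → ℝ) (s : ℝ) :
    objGap A b c (s • y) s = s ^ 2 * objGap A b c y 1 := by
  simp only [objGap, mulVec_smul, smul_dotProduct, dotProduct_smul, smul_eq_mul]
  ring

theorem eqPenalty_nonneg (ξ : ι → ℝ) (s : ℝ) : 0 ≤ eqPenalty S t ξ s :=
  Finset.sum_nonneg fun _ _ => mul_self_nonneg _

theorem eqPenalty_eq_zero_iff {ξ : ι → ℝ} {s : ℝ} : eqPenalty S t ξ s = 0 ↔ S *ᵥ ξ = s • t := by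
  rw [eqPenalty, dotProduct_self_eq_zero, sub_eq_zero]

variable {S t A b}

theorem pos_of_eqPenalty_eq_zero (hrec : ∀ ξ : ι → ℝ, 0 ≤ ξ → S *ᵥ ξ = 0 → ξ = 0)
    {ξ : ι → ℝ} {s : ℝ} (hξ : 0 ≤ ξ) (hs : 0 ≤ s) (hξs : ξ ≠ 0 ∨ s ≠ 0)
    (hP : eqPenalty S t ξ s = 0) : 0 < s := by
  refine hs.lt_of_ne fun hs0 => ?_
  subst hs0
  rw [eqPenalty_eq_zero_iff, zero_smul] at hP
  simp [hrec ξ hξ hP] at hξs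

theorem eq_smul_of_eqPenalty_eq_zero {ξ : ι → ℝ} {s : ℝ} (hξ : 0 ≤ ξ) (hs : 0 < s)
    (hP : eqPenalty S t ξ s = 0) : ∃ y, 0 ≤ y ∧ S *ᵥ y = t ∧ ξ = s • y := by
  rw [eqPenalty_eq_zero_iff] at hP
  refine ⟨s⁻¹ • ξ, smul_nonneg (inv_nonneg.2 hs.le) hξ, ?_, ?_⟩
  · rw [mulVec_smul, hP, inv_smul_smul₀ hs.ne']
  · rw [smul_inv_smul₀ hs.ne']

theorem binPenalty_one_nonneg (B : ι → Prop) [DecidablePred B] {y : ι → ℝ} (hy : 0 ≤ y)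
    (hy1 : ∀ i, B i → y i ≤ 1) : 0 ≤ binPenalty B y 1 :=
  Finset.sum_nonneg fun i _ => by
    split_ifs with hi
    exacts [mul_nonneg (hy i) (sub_nonneg.2 (hy1 i hi)), le_rfl]

theorem binary_of_binPenalty_one_eq_zero (B : ι → Prop) [DecidablePred B] {y : ι → ℝ}
    (hy : 0 ≤ y) (hy1 : ∀ i, B i → y i ≤ 1) (h : binPenalty B y 1 = 0) :
    ∀ i, B i → y i = 0 ∨ y i = 1 := by
  intro i hi
  have hterm := (Finset.sum_eq_zero_iff_of_nonneg fun j _ => by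
    split_ifs with hj
    exacts [mul_nonneg (hy j) (sub_nonneg.2 (hy1 j hj)), le_rfl]).1 h i (Finset.mem_univ i)
  rw [if_pos hi, mul_eq_zero, sub_eq_zero] at hterm
  exact hterm.imp id Eq.symm

theorem binPenalty_nonneg_of_eqPenalty_eq_zero (B : ι → Prop) [DecidablePred B]
    (hbd : ∀ ξ : ι → ℝ, 0 ≤ ξ → S *ᵥ ξ = t → ∀ i, B i → ξ i ≤ 1)
    {ξ : ι → ℝ} {s : ℝ} (hξ : 0 ≤ ξ) (hs : 0 < s) (hP : eqPenalty S t ξ s = 0) :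
    0 ≤ binPenalty B ξ s := by
  obtain ⟨y, hy, hSy, rfl⟩ := eq_smul_of_eqPenalty_eq_zero hξ hs hP
  rw [binPenalty_smul]
  exact mul_nonneg (sq_nonneg s) (binPenalty_one_nonneg B hy (hbd y hy hSy))

theorem objGap_pos_of_binPenalty_eq_zero (B : ι → Prop) [DecidablePred B] {c : ℝ}
    (hbd : ∀ ξ : ι → ℝ, 0 ≤ ξ → S *ᵥ ξ = t → ∀ i, B i → ξ i ≤ 1)
    (hc : ∀ ξ : ι → ℝ, 0 ≤ ξ → S *ᵥ ξ = t → (∀ i, B i → ξ i = 0 ∨ ξ i = 1) →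
      A *ᵥ ξ ⬝ᵥ A *ᵥ ξ + b ⬝ᵥ ξ < c)
    {ξ : ι → ℝ} {s : ℝ} (hξ : 0 ≤ ξ) (hs : 0 < s) (hP : eqPenalty S t ξ s = 0)
    (hG : binPenalty B ξ s = 0) : 0 < objGap A b c ξ s := by
  obtain ⟨y, hy, hSy, rfl⟩ := eq_smul_of_eqPenalty_eq_zero hξ hs hP
  rw [binPenalty_smul, mul_eq_zero, or_iff_right (pow_ne_zero 2 hs.ne')] at hG
  have hbin := binary_of_binPenalty_one_eq_zero B hy (hbd y hy hSy) hG
  rw [objGap_smul]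
  refine mul_pos (pow_pos hs 2) ?_
  simpa [objGap] using hc y hy hSy hbin

theorem exists_penalty_pos_on_sphere (B : ι → Prop) [DecidablePred B] {c : ℝ}
    (hrec : ∀ ξ : ι → ℝ, 0 ≤ ξ → S *ᵥ ξ = 0 → ξ = 0)
    (hbd : ∀ ξ : ι → ℝ, 0 ≤ ξ → S *ᵥ ξ = t → ∀ i, B i → ξ i ≤ 1)
    (hc : ∀ ξ : ι → ℝ, 0 ≤ ξ → S *ᵥ ξ = t → (∀ i, B i → ξ i = 0 ∨ ξ i = 1) →
      A *ᵥ ξ ⬝ᵥ A *ᵥ ξ + b ⬝ᵥ ξ < c) :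
    ∃ ρ σ : ℝ, ∀ η : ι ⊕ Unit → ℝ, 0 ≤ η → ‖η‖ = 1 →
      0 < ρ * eqPenalty S t (η ∘ Sum.inl) (η (Sum.inr ())) +
        σ * binPenalty B (η ∘ Sum.inl) (η (Sum.inr ())) +
        objGap A b c (η ∘ Sum.inl) (η (Sum.inr ())) := by
  set P := fun η : ι ⊕ Unit → ℝ => eqPenalty S t (η ∘ Sum.inl) (η (Sum.inr ()))
  set G := fun η : ι ⊕ Unit → ℝ => binPenalty B (η ∘ Sum.inl) (η (Sum.inr ()))
  set Q := fun η : ι ⊕ Unit → ℝ => objGap A b c (η ∘ Sum.inl) (η (Sum.inr ()))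
  have hPc : Continuous P := by unfold P eqPenalty; fun_prop
  have hGc : Continuous G :=
    continuous_finsetSum _ fun i _ => by split_ifs <;> fun_prop
  have hQc : Continuous Q := by unfold Q objGap; fun_prop
  set T := Set.Ici (0 : ι ⊕ Unit → ℝ) ∩ Metric.sphere 0 1
  have hT : IsCompact T := (isCompact_sphere 0 1).inter_left isClosed_Ici
  set D := T ∩ {η | P η = 0}
  have hD : IsCompact D := hT.inter_right (isClosed_eq hPc continuous_const)
  have hDpos : ∀ η ∈ D, 0 < η (Sum.inr ()) := by
    rintro η ⟨⟨hη, hη1⟩, hP⟩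
    refine pos_of_eqPenalty_eq_zero hrec (fun i => hη _) (hη _) ?_ hP
    by_contra! h
    have : η = 0 := by
      ext (i | _)
      exacts [congr_fun h.1 i, h.2]
    simp [this] at hη1
  obtain ⟨σ, hσ⟩ := hD.exists_forall_mul_add_pos hGc hQc
    (fun η hηD => binPenalty_nonneg_of_eqPenalty_eq_zero B hbd (fun i => hηD.1.1 _)
      (hDpos η hηD) hηD.2)
    (fun η hηD => objGap_pos_of_binPenalty_eq_zero B hbd hc (fun i => hηD.1.1 _)
      (hDpos η hηD) hηD.2)
  obtain ⟨ρ, hρ⟩ := hT.exists_forall_mul_add_pos hPc ((continuous_const.mul hGc).add hQc)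
    (fun η _ => eqPenalty_nonneg S t _ _) (fun η hη hP => hσ η ⟨hη, hP⟩)
  refine ⟨ρ, σ, fun η hη hη1 => ?_⟩
  rw [add_assoc]
  exact hρ η ⟨hη, mem_sphere_zero_iff_norm.2 hη1⟩

end Penalty

section DualMatrix

variable {ι κ μ : Type*} [Fintype ι] [Fintype κ] [Fintype μ] [DecidableEq ι] [DecidableEq κ]
  (S : Matrix κ ι ℝ) (t : κ → ℝ) (A : Matrix μ ι ℝ) (b : ι → ℝ)

noncomputable def dualMatrix (τ : ℝ) (ψ φ : κ → ℝ) (g : ι → ℝ) :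
    Matrix (ι ⊕ Unit) (ι ⊕ Unit) ℝ :=
  fromBlocks (Sᵀ * diagonal φ * S - Aᵀ * A - diagonal g)
    (of fun i _ => ((Sᵀ *ᵥ ψ) i - b i + g i) / 2)
    (of fun _ j => ((Sᵀ *ᵥ ψ) j - b j + g j) / 2)
    (of fun _ _ => τ)

theorem dotProduct_dualMatrix_mulVec (τ : ℝ) (ψ φ : κ → ℝ) (g ξ : ι → ℝ) (s : ℝ) :
    Sum.elim ξ (fun _ => s) ⬝ᵥ dualMatrix S A b τ ψ φ g *ᵥ Sum.elim ξ (fun _ => s) =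
      ∑ j, φ j * (S *ᵥ ξ) j ^ 2 - A *ᵥ ξ ⬝ᵥ A *ᵥ ξ - ∑ i, g i * ξ i ^ 2
        + s * (ψ ⬝ᵥ S *ᵥ ξ - b ⬝ᵥ ξ + g ⬝ᵥ ξ) + τ * s ^ 2 := by
  have hdiag : ξ ⬝ᵥ (Sᵀ * diagonal φ * S - Aᵀ * A - diagonal g) *ᵥ ξ =
      ∑ j, φ j * (S *ᵥ ξ) j ^ 2 - A *ᵥ ξ ⬝ᵥ A *ᵥ ξ - ∑ i, g i * ξ i ^ 2 := by
    simp only [sub_mulVec, dotProduct_sub, ← mulVec_mulVec, dotProduct_transpose_mulVec]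
    simp only [dotProduct, mulVec_diagonal]
    congr 1
    · congr 1
      exact Finset.sum_congr rfl fun _ _ => by ring
    · exact Finset.sum_congr rfl fun _ _ => by ring
  have hψ : (Sᵀ *ᵥ ψ) ⬝ᵥ ξ = ψ ⬝ᵥ S *ᵥ ξ := by
    rw [dotProduct_comm, dotProduct_transpose_mulVec]
  have hc : (fun i => ((Sᵀ *ᵥ ψ) i - b i + g i) / 2) ⬝ᵥ ξ =
      (ψ ⬝ᵥ S *ᵥ ξ - b ⬝ᵥ ξ + g ⬝ᵥ ξ) / 2 := by
    rw [← dotProduct_transpose_mulVec, dotProduct_comm]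
    simp only [dotProduct, Finset.sum_div, ← Finset.sum_sub_distrib, ← Finset.sum_add_distrib]
    exact Finset.sum_congr rfl fun _ _ => by ring
  rw [dualMatrix, fromBlocks_mulVec, sumElim_dotProduct_sumElim, Sum.elim_comp_inl,
    Sum.elim_comp_inr, dotProduct_add, hdiag]
  set c := fun i => ((Sᵀ *ᵥ ψ) i - b i + g i) / 2
  have h12 : ξ ⬝ᵥ (of fun i (_ : Unit) => c i) *ᵥ (fun _ => s) = s * (c ⬝ᵥ ξ) := by
    simp [mulVec, dotProduct, Finset.mul_sum, mul_comm, mul_left_comm]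
  have h2 : (fun _ : Unit => s) ⬝ᵥ
        ((of fun (_ : Unit) j => c j) *ᵥ ξ + (of fun (_ : Unit) (_ : Unit) => τ) *ᵥ fun _ => s) =
      s * (c ⬝ᵥ ξ) + τ * s ^ 2 := by
    simp only [dotProduct, mulVec, Pi.add_apply, of_apply, Finset.univ_unique,
      PUnit.default_eq_unit, Finset.sum_const, Finset.card_singleton, one_smul]
    ring
  rw [h12, h2, hc]
  ring

theorem dotProduct_dualMatrix_penalty_mulVec (B : ι → Prop) [DecidablePred B] (ρ σ c : ℝ)
    (ξ : ι → ℝ) (s : ℝ) :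
    Sum.elim ξ (fun _ => s) ⬝ᵥ
        dualMatrix S A b (ρ * (t ⬝ᵥ t) + c) (-(2 * ρ) • t) (fun _ => ρ)
          (fun i => if B i then σ else 0) *ᵥ Sum.elim ξ (fun _ => s) =
      ρ * eqPenalty S t ξ s + σ * binPenalty B ξ s + objGap A b c ξ s := by
  have hP : eqPenalty S t ξ s = S *ᵥ ξ ⬝ᵥ S *ᵥ ξ - 2 * s * (t ⬝ᵥ S *ᵥ ξ) + s ^ 2 * (t ⬝ᵥ t) := by
    simp only [eqPenalty, sub_dotProduct, dotProduct_sub, smul_dotProduct, dotProduct_smul,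
      smul_eq_mul, dotProduct_comm (S *ᵥ ξ) t]
    ring
  have hG : σ * binPenalty B ξ s = s * ((fun i => if B i then σ else 0) ⬝ᵥ ξ) -
      ∑ i, (if B i then σ else 0) * ξ i ^ 2 := by
    simp only [binPenalty, dotProduct, Finset.mul_sum, ← Finset.sum_sub_distrib]
    refine Finset.sum_congr rfl fun i _ => ?_
    split_ifs <;> ring
  have hφ : ∑ j, ρ * (S *ᵥ ξ) j ^ 2 = ρ * (S *ᵥ ξ ⬝ᵥ S *ᵥ ξ) := by
    simp only [dotProduct, Finset.mul_sum, sq]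
  rw [dotProduct_dualMatrix_mulVec, hφ, smul_dotProduct, smul_eq_mul, objGap, hP, hG]
  ring

variable {S t A b}

theorem objective_le_of_isCopositive_dualMatrix (B : ι → Prop) {τ : ℝ} {ψ φ : κ → ℝ}
    {g : ι → ℝ} (hg : ∀ i, ¬ B i → g i = 0) (hcop : IsCopositive (dualMatrix S A b τ ψ φ g))
    {ξ : ι → ℝ} (hξ : 0 ≤ ξ) (hSξ : S *ᵥ ξ = t) (hbin : ∀ i, B i → ξ i = 0 ∨ ξ i = 1) :
    A *ᵥ ξ ⬝ᵥ A *ᵥ ξ + b ⬝ᵥ ξ ≤ t ⬝ᵥ ψ + (fun j => t j * t j) ⬝ᵥ φ + τ := by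
  have hquad := hcop (Sum.elim ξ fun _ => 1) (by rintro (i | _); exacts [hξ i, zero_le_one])
  have hgξ : ∑ i, g i * ξ i ^ 2 = g ⬝ᵥ ξ := by
    refine Finset.sum_congr rfl fun i _ => ?_
    by_cases hi : B i
    · rcases hbin i hi with h | h <;> simp [h]
    · simp [hg i hi]
  have hφ : ∑ j, φ j * t j ^ 2 = (fun j => t j * t j) ⬝ᵥ φ :=
    Finset.sum_congr rfl fun _ _ => by ring
  rw [dotProduct_dualMatrix_mulVec, hSξ, hgξ, hφ, dotProduct_comm ψ] at hquad
  linarith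

theorem exists_isCopositive_dualMatrix (B : ι → Prop) [DecidablePred B] {c : ℝ}
    (hrec : ∀ ξ : ι → ℝ, 0 ≤ ξ → S *ᵥ ξ = 0 → ξ = 0)
    (hbd : ∀ ξ : ι → ℝ, 0 ≤ ξ → S *ᵥ ξ = t → ∀ i, B i → ξ i ≤ 1)
    (hc : ∀ ξ : ι → ℝ, 0 ≤ ξ → S *ᵥ ξ = t → (∀ i, B i → ξ i = 0 ∨ ξ i = 1) →
      A *ᵥ ξ ⬝ᵥ A *ᵥ ξ + b ⬝ᵥ ξ < c) :
    ∃ (τ : ℝ) (ψ φ : κ → ℝ) (σ : ℝ),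
      IsCopositive (dualMatrix S A b τ ψ φ fun i => if B i then σ else 0) ∧
        t ⬝ᵥ ψ + (fun j => t j * t j) ⬝ᵥ φ + τ = c := by
  obtain ⟨ρ, σ, hpos⟩ := exists_penalty_pos_on_sphere B hrec hbd hc
  refine ⟨ρ * (t ⬝ᵥ t) + c, -(2 * ρ) • t, fun _ => ρ, σ,
    IsCopositive.of_forall_norm_eq_one fun η hη hη1 => ?_, ?_⟩
  · have hsplit : η = Sum.elim (η ∘ Sum.inl) fun _ => η (Sum.inr ()) := by
      ext (i | _) <;> rfl
    rw [hsplit, dotProduct_dualMatrix_penalty_mulVec]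
    exact (hpos η hη hη1).le
  · have hφ : (fun j => t j * t j) ⬝ᵥ (fun _ => ρ) = ρ * (t ⬝ᵥ t) := by
      simp only [dotProduct, Finset.mul_sum]
      exact Finset.sum_congr rfl fun _ _ => by ring
    rw [dotProduct_smul, smul_eq_mul, hφ]
    ring

end DualMatrix

theorem copositive_strong_duality_general
    (J K M L : ℕ)
    (S : Matrix (Fin J) (Fin K) ℝ) (t : Fin J → ℝ)
    (A : Matrix (Fin M) (Fin K) ℝ) (b : Fin K → ℝ)
    (hrec : ∀ ξ : Fin K → ℝ, (∀ i, 0 ≤ ξ i) → S.mulVec ξ = 0 → ξ = 0)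
    (hbd : ∀ ξ : Fin K → ℝ, (∀ i, 0 ≤ ξ i) → S.mulVec ξ = t →
      ∀ ℓ : Fin K, (ℓ : ℕ) < L → ξ ℓ ≤ 1) :
    sSup {z : EReal | ∃ ξ : Fin K → ℝ, (∀ i, 0 ≤ ξ i) ∧ S.mulVec ξ = t ∧
        (∀ ℓ : Fin K, (ℓ : ℕ) < L → ξ ℓ = 0 ∨ ξ ℓ = 1) ∧
        z = ((A.mulVec ξ ⬝ᵥ A.mulVec ξ + b ⬝ᵥ ξ : ℝ) : EReal)} =
    sInf {z : EReal | ∃ (τ : ℝ) (ψ φ : Fin J → ℝ) (γ : Fin L → ℝ),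
        IsCopositive
          (fromBlocks
            (Sᵀ * diagonal φ * S - Aᵀ * A -
              diagonal (fun ℓ : Fin K => if h : (ℓ : ℕ) < L then γ ⟨ℓ, h⟩ else 0))
            (of fun i (_ : Unit) => (Sᵀ.mulVec ψ i - b i +
              (if h : (i : ℕ) < L then γ ⟨i, h⟩ else 0)) / 2)
            (of fun (_ : Unit) j => (Sᵀ.mulVec ψ j - b j +
              (if h : (j : ℕ) < L then γ ⟨j, h⟩ else 0)) / 2)
            (of fun (_ : Unit) (_ : Unit) => τ)) ∧
        z = ((t ⬝ᵥ ψ + (fun j => t j * t j) ⬝ᵥ φ + τ : ℝ) : EReal)} := by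
  apply le_antisymm
  · refine sSup_le fun p ⟨ξ, hξ, hSξ, hbin, hp⟩ => le_sInf fun d ⟨τ, ψ, φ, γ, hcop, hd⟩ => ?_
    rw [hp, hd, EReal.coe_le_coe_iff]
    exact objective_le_of_isCopositive_dualMatrix (fun ℓ : Fin K => (ℓ : ℕ) < L)
      (fun _ hℓ => dif_neg hℓ) hcop hξ hSξ hbin
  · refine EReal.le_of_forall_lt_iff_le.1 fun c hc => sInf_le ?_
    obtain ⟨τ, ψ, φ, σ, hcop, hval⟩ :=
      exists_isCopositive_dualMatrix (fun ℓ : Fin K => (ℓ : ℕ) < L) hrec hbd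
        fun ξ hξ hSξ hbin => EReal.coe_lt_coe_iff.1 (hc.trans_le' (le_sSup ⟨ξ, hξ, hSξ, hbin, rfl⟩))
    exact ⟨τ, ψ, φ, fun _ => σ, hcop, by rw [hval]⟩

/-- Strong duality between the mixed-binary quadratic program and its dual copositive
program (values taken in the extended reals). -/
theorem copositive_strong_duality
    (J K M L : ℕ) (hL : L ≤ K)
    (S : Matrix (Fin J) (Fin K) ℝ) (t : Fin J → ℝ)
    (A : Matrix (Fin M) (Fin K) ℝ) (b : Fin K → ℝ)
    (hne : ∃ ξ : Fin K → ℝ, (∀ i, 0 ≤ ξ i) ∧ S.mulVec ξ = t ∧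
      ∀ ℓ : Fin K, (ℓ : ℕ) < L → ξ ℓ = 0 ∨ ξ ℓ = 1)
    (hrec : ∀ ξ : Fin K → ℝ, (∀ i, 0 ≤ ξ i) → S.mulVec ξ = 0 → ξ = 0)
    (hbd : ∀ ξ : Fin K → ℝ, (∀ i, 0 ≤ ξ i) → S.mulVec ξ = t →
      ∀ ℓ : Fin K, (ℓ : ℕ) < L → ξ ℓ ≤ 1) :
    sSup {z : EReal | ∃ ξ : Fin K → ℝ, (∀ i, 0 ≤ ξ i) ∧ S.mulVec ξ = t ∧
        (∀ ℓ : Fin K, (ℓ : ℕ) < L → ξ ℓ = 0 ∨ ξ ℓ = 1) ∧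
        z = ((A.mulVec ξ ⬝ᵥ A.mulVec ξ + b ⬝ᵥ ξ : ℝ) : EReal)} =
    sInf {z : EReal | ∃ (τ : ℝ) (ψ φ : Fin J → ℝ) (γ : Fin L → ℝ),
        IsCopositive
          (fromBlocks
            (Sᵀ * diagonal φ * S - Aᵀ * A -
              diagonal (fun ℓ : Fin K => if h : (ℓ : ℕ) < L then γ ⟨ℓ, h⟩ else 0))
            (of fun i (_ : Unit) => (Sᵀ.mulVec ψ i - b i +
              (if h : (i : ℕ) < L then γ ⟨i, h⟩ else 0)) / 2)
            (of fun (_ : Unit) j => (Sᵀ.mulVec ψ j - b j +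
              (if h : (j : ℕ) < L then γ ⟨j, h⟩ else 0)) / 2)
            (of fun (_ : Unit) (_ : Unit) => τ)) ∧
        z = ((t ⬝ᵥ ψ + (fun j => t j * t j) ⬝ᵥ φ + τ : ℝ) : EReal)} :=
  copositive_strong_duality_general J K M L S t A b hrec hbd
end

section
/- Let S ∈ ℝ^{J×K}, t ∈ ℝ^J, A ∈ ℝ^{M×K}, b ∈ ℝ^K, and let Ξ = { ξ ∈ ℝ^K : ξ ≥ 0, Sξ = t }. Let r > 0, Q ∈ ℝ^{K×K}, and c ∈ ℝ^K be such that Ξ ⊆ { ξ ∈ ℝ^K : ‖Q(ξ − c)‖ ≤ r }. Suppose κ ∈ ℝ, ρ ≥ 0, θ ∈ ℝ^J, and η ∈ ℝ^K with η ≥ 0 are such that the (K+1)×(K+1) block matrix [[ρQᵀQ − AᵀA, ½(Sᵀθ − b − η − 2ρQᵀQc)], [½(Sᵀθ − b − η − 2ρQᵀQc)ᵀ, κ]] is positive semidefinite. Then every ξ ∈ Ξ satisfies ‖Aξ‖² + bᵀξ ≤ tᵀθ + ρr² − ρ‖Qc‖² + κ. -/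
/-!
Weak duality: the positive semidefinite matrix has a nonnegative quadratic form at `(ξ, 1)`,
which reads `0 ≤ ρ ‖Qξ‖² - ‖Aξ‖² + (Sᵀθ - b - η - 2ρQᵀQc)ᵀξ + κ`. For `ξ ∈ Ξ` the linear term
equals `tᵀθ - bᵀξ - ηᵀξ - 2ρ (Qc)ᵀ(Qξ)`, the term `ηᵀξ` is nonnegative, and
`ρ (‖Qξ‖² - 2 (Qc)ᵀ(Qξ)) = ρ (‖Q(ξ - c)‖² - ‖Qc‖²) ≤ ρ (r² - ‖Qc‖²)` by the ball constraint.
-/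

open Matrix

namespace Matrix

variable {m n : Type*} [Fintype m] [Fintype n]

theorem PosSemidef.dotProduct_mulVec_add_two_mul_add_nonneg {P : Matrix n n ℝ} {v : n → ℝ}
    {κ : ℝ}
    (h : (fromBlocks P (of fun i (_ : Unit) => v i) (of fun (_ : Unit) j => v j)
      (of fun (_ : Unit) (_ : Unit) => κ)).PosSemidef) (x : n → ℝ) :
    0 ≤ x ⬝ᵥ P *ᵥ x + 2 * (v ⬝ᵥ x) + κ := by
  have hcol : (of fun i (_ : Unit) => v i) *ᵥ (fun _ => 1) = v := by
    ext; simp [mulVec, dotProduct]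
  have hrow : (fun _ => 1) ⬝ᵥ (of fun (_ : Unit) j => v j) *ᵥ x = v ⬝ᵥ x := by
    simp [mulVec, dotProduct]
  have hcorner : (fun _ => 1) ⬝ᵥ (of fun (_ : Unit) (_ : Unit) => κ) *ᵥ (fun _ => 1) = κ := by
    simp [mulVec, dotProduct]
  have := h.dotProduct_mulVec_nonneg (Sum.elim x fun _ => 1)
  simp only [star_trivial, fromBlocks_mulVec, sumElim_dotProduct_sumElim, Sum.elim_comp_inl,
    Sum.elim_comp_inr, dotProduct_add, hcol, hrow, hcorner, dotProduct_comm x v] at this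
  linarith

theorem dotProduct_mulVec_transpose_mul_self (B : Matrix m n ℝ) (x y : n → ℝ) :
    x ⬝ᵥ (Bᵀ * B) *ᵥ y = B *ᵥ x ⬝ᵥ B *ᵥ y := by
  rw [← mulVec_mulVec, dotProduct_mulVec, vecMul_transpose]

theorem mulVec_sub_dotProduct_self (B : Matrix m n ℝ) (x c : n → ℝ) :
    B *ᵥ (x - c) ⬝ᵥ B *ᵥ (x - c) =
      B *ᵥ x ⬝ᵥ B *ᵥ x - 2 * (B *ᵥ c ⬝ᵥ B *ᵥ x) + B *ᵥ c ⬝ᵥ B *ᵥ c := by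
  rw [mulVec_sub, sub_dotProduct, dotProduct_sub, dotProduct_sub,
    dotProduct_comm (B *ᵥ x) (B *ᵥ c)]
  ring

end Matrix

theorem approximate_S_lemma_bound_general
    (J K M : ℕ)
    (S : Matrix (Fin J) (Fin K) ℝ) (t : Fin J → ℝ)
    (A : Matrix (Fin M) (Fin K) ℝ) (b : Fin K → ℝ)
    (r : ℝ)
    (Q : Matrix (Fin K) (Fin K) ℝ) (c : Fin K → ℝ)
    (hball : ∀ ξ : Fin K → ℝ, (∀ i, 0 ≤ ξ i) → S.mulVec ξ = t →
      Q.mulVec (ξ - c) ⬝ᵥ Q.mulVec (ξ - c) ≤ r ^ 2)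
    (κ : ℝ) (ρ : ℝ) (hρ : 0 ≤ ρ) (θ : Fin J → ℝ) (η : Fin K → ℝ) (hη : ∀ i, 0 ≤ η i)
    (hpsd : (fromBlocks
        (ρ • (Qᵀ * Q) - Aᵀ * A)
        (of fun i (_ : Unit) =>
          (Sᵀ.mulVec θ i - b i - η i - 2 * ρ * (Qᵀ * Q).mulVec c i) / 2)
        (of fun (_ : Unit) j =>
          (Sᵀ.mulVec θ j - b j - η j - 2 * ρ * (Qᵀ * Q).mulVec c j) / 2)
        (of fun (_ : Unit) (_ : Unit) => κ)).PosSemidef) :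
    ∀ ξ : Fin K → ℝ, (∀ i, 0 ≤ ξ i) → S.mulVec ξ = t →
      A.mulVec ξ ⬝ᵥ A.mulVec ξ + b ⬝ᵥ ξ ≤
        t ⬝ᵥ θ + ρ * r ^ 2 - ρ * (Q.mulVec c ⬝ᵥ Q.mulVec c) + κ := by
  intro ξ hξ hSξ
  have hform := hpsd.dotProduct_mulVec_add_two_mul_add_nonneg ξ
  have hquad :
      ξ ⬝ᵥ (ρ • (Qᵀ * Q) - Aᵀ * A) *ᵥ ξ = ρ * (Q *ᵥ ξ ⬝ᵥ Q *ᵥ ξ) - A *ᵥ ξ ⬝ᵥ A *ᵥ ξ := by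
    rw [sub_mulVec, dotProduct_sub, smul_mulVec, dotProduct_smul, smul_eq_mul,
      dotProduct_mulVec_transpose_mul_self, dotProduct_mulVec_transpose_mul_self]
  have hlin : 2 * ((fun j => ((Sᵀ *ᵥ θ) j - b j - η j - 2 * ρ * ((Qᵀ * Q) *ᵥ c) j) / 2) ⬝ᵥ ξ) =
      t ⬝ᵥ θ - b ⬝ᵥ ξ - η ⬝ᵥ ξ - 2 * ρ * (Q *ᵥ c ⬝ᵥ Q *ᵥ ξ) := by
    have hS : Sᵀ *ᵥ θ ⬝ᵥ ξ = t ⬝ᵥ θ := by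
      rw [mulVec_transpose, ← dotProduct_mulVec, hSξ, dotProduct_comm]
    have hQ : (Qᵀ * Q) *ᵥ c ⬝ᵥ ξ = Q *ᵥ c ⬝ᵥ Q *ᵥ ξ := by
      rw [dotProduct_comm, dotProduct_mulVec_transpose_mul_self, dotProduct_comm]
    rw [← hS, ← hQ]
    simp only [dotProduct, Finset.mul_sum, ← Finset.sum_sub_distrib]
    exact Finset.sum_congr rfl fun j _ => by ring
  have hηξ : 0 ≤ η ⬝ᵥ ξ := dotProduct_nonneg_of_nonneg hη hξ
  have hρball := mul_le_mul_of_nonneg_left (hball ξ hξ hSξ) hρ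
  rw [mulVec_sub_dotProduct_self] at hρball
  linarith

/-- Weak duality for the approximate S-lemma: a feasible dual solution of the SDP
upper-bounds the quadratic objective over the polytope. -/
theorem approximate_S_lemma_bound
    (J K M : ℕ)
    (S : Matrix (Fin J) (Fin K) ℝ) (t : Fin J → ℝ)
    (A : Matrix (Fin M) (Fin K) ℝ) (b : Fin K → ℝ)
    (r : ℝ) (hr : 0 < r)
    (Q : Matrix (Fin K) (Fin K) ℝ) (c : Fin K → ℝ)
    (hball : ∀ ξ : Fin K → ℝ, (∀ i, 0 ≤ ξ i) → S.mulVec ξ = t →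
      Q.mulVec (ξ - c) ⬝ᵥ Q.mulVec (ξ - c) ≤ r ^ 2)
    (κ : ℝ) (ρ : ℝ) (hρ : 0 ≤ ρ) (θ : Fin J → ℝ) (η : Fin K → ℝ) (hη : ∀ i, 0 ≤ η i)
    (hpsd : (fromBlocks
        (ρ • (Qᵀ * Q) - Aᵀ * A)
        (of fun i (_ : Unit) =>
          (Sᵀ.mulVec θ i - b i - η i - 2 * ρ * (Qᵀ * Q).mulVec c i) / 2)
        (of fun (_ : Unit) j =>
          (Sᵀ.mulVec θ j - b j - η j - 2 * ρ * (Qᵀ * Q).mulVec c j) / 2)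
        (of fun (_ : Unit) (_ : Unit) => κ)).PosSemidef) :
    ∀ ξ : Fin K → ℝ, (∀ i, 0 ≤ ξ i) → S.mulVec ξ = t →
      A.mulVec ξ ⬝ᵥ A.mulVec ξ + b ⬝ᵥ ξ ≤
        t ⬝ᵥ θ + ρ * r ^ 2 - ρ * (Q.mulVec c ⬝ᵥ Q.mulVec c) + κ :=
  approximate_S_lemma_bound_general J K M S t A b r Q c hball κ ρ hρ θ η hη hpsd
end

section
/- Let S ∈ ℝ^{J×K}, t ∈ ℝ^J, A ∈ ℝ^{M×K}, b ∈ ℝ^K, and let Ξ = { ξ ∈ ℝ^K : ξ ≥ 0, Sξ = t }. Let r > 0, Q ∈ ℝ^{K×K}, and c ∈ ℝ^K be such that Ξ ⊆ { ξ ∈ ℝ^K : ‖Q(ξ − c)‖ ≤ r }. Suppose τ ∈ ℝ, λ ≥ 0, h ≥ 0, ψ, φ ∈ ℝ^J, F ∈ ℝ^{K×K} with F ≥ 0 entrywise, and g ∈ ℝ^K with g ≥ 0 are such that [[λQᵀQ + Sᵀ diag(φ) S − AᵀA, ½(Sᵀψ − b − 2λQᵀQc)], [½(Sᵀψ − b −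 2λQᵀQc)ᵀ, τ]] − [[F, g],[gᵀ, h]] is positive semidefinite. Then every ξ ∈ Ξ satisfies ‖Aξ‖² + bᵀξ ≤ tᵀψ + (t∘t)ᵀφ + λr² − λ‖Qc‖² + τ. -/
/-!
The certificate exhibits the bordered matrix as PSD plus entrywise nonnegative, hence copositive.
Evaluating its quadratic form at `(ξ, 1)` for `ξ ∈ Ξ` and substituting `Sξ = t` turns it into the
claimed bound, up to the term `λ (‖Q(ξ - c)‖² - r²)`, which is nonpositive on `Ξ`.
-/

open Matrix

section QuadraticForms

variable {m n R : Type*} [Fintype m] [Fintype n] [CommRing R]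

theorem dotProduct_transpose_mul_mulVec (B C : Matrix m n R) (x y : n → R) :
    x ⬝ᵥ (Bᵀ * C) *ᵥ y = B *ᵥ x ⬝ᵥ C *ᵥ y := by
  rw [← mulVec_mulVec, dotProduct_mulVec, vecMul_transpose]

theorem dotProduct_diagonal_mulVec_self [DecidableEq m] (d y : m → R) :
    y ⬝ᵥ diagonal d *ᵥ y = (fun j => y j * y j) ⬝ᵥ d := by
  simp only [mulVec_diagonal, dotProduct, mul_assoc, mul_comm (d _)]

theorem sub_dotProduct_sub_self (u v : m → R) :
    (u - v) ⬝ᵥ (u - v) = u ⬝ᵥ u - 2 * (u ⬝ᵥ v) + v ⬝ᵥ v := by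
  rw [sub_dotProduct, dotProduct_sub, dotProduct_sub, dotProduct_comm v u]
  ring

end QuadraticForms

theorem fromBlocks_border_nonneg {n R : Type*} [Zero R] [LE R] {F : Matrix n n R} {g : n → R}
    {h : R} (hF : ∀ i j, 0 ≤ F i j) (hg : ∀ i, 0 ≤ g i) (hh : 0 ≤ h) :
    ∀ i j, 0 ≤ fromBlocks F (of fun i (_ : Unit) => g i) (of fun (_ : Unit) j => g j)
      (of fun (_ : Unit) (_ : Unit) => h) i j := by
  rintro (i | _) (j | _) <;> simp [hF, hg, hh]

section BorderedForm

variable {n : Type*} [Fintype n]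

theorem dotProduct_mulVec_nonneg_of_nonneg {R : Type*} [Semiring R] [PartialOrder R]
    [IsOrderedRing R] {N : Matrix n n R} (hN : ∀ i j, 0 ≤ N i j) {z : n → R} (hz : 0 ≤ z) :
    0 ≤ z ⬝ᵥ N *ᵥ z :=
  dotProduct_nonneg_of_nonneg hz fun i => dotProduct_nonneg_of_nonneg (hN i) hz

theorem dotProduct_mulVec_nonneg_of_posSemidef_sub {M N : Matrix n n ℝ}
    (hMN : (M - N).PosSemidef) (hN : ∀ i j, 0 ≤ N i j) {z : n → ℝ} (hz : 0 ≤ z) :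
    0 ≤ z ⬝ᵥ M *ᵥ z := by
  have h₁ : 0 ≤ z ⬝ᵥ (M - N) *ᵥ z := hMN.dotProduct_mulVec_nonneg z
  have h₂ := dotProduct_mulVec_nonneg_of_nonneg hN hz
  rw [sub_mulVec, dotProduct_sub] at h₁
  linarith

theorem dotProduct_fromBlocks_border_mulVec {R : Type*} [CommRing R] (P : Matrix n n R)
    (q : n → R) (τ : R) (x : n → R) :
    Sum.elim x 1 ⬝ᵥ fromBlocks P (of fun i (_ : Unit) => q i) (of fun (_ : Unit) j => q j)
        (of fun (_ : Unit) (_ : Unit) => τ) *ᵥ Sum.elim x 1 =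
      x ⬝ᵥ P *ᵥ x + 2 * (q ⬝ᵥ x) + τ := by
  rw [fromBlocks_mulVec, dotProduct_block]
  simp only [Sum.elim_comp_inl, Sum.elim_comp_inr, dotProduct_add]
  simp only [dotProduct, mulVec, Finset.univ_unique, PUnit.default_eq_unit, of_apply, Pi.one_apply,
    mul_comm (q _), one_mul, Finset.sum_const, Finset.card_singleton, one_smul, mul_one]
  ring

end BorderedForm

section CopositiveCertificate

variable {j k : Type*} [Fintype j] [Fintype k]

theorem dotProduct_certificateMatrix_mulVec {m : Type*} [Fintype m] [DecidableEq j]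
    (S : Matrix j k ℝ) (A : Matrix m k ℝ) (Q : Matrix k k ℝ) (lam : ℝ) (φ : j → ℝ) (ξ : k → ℝ) :
    ξ ⬝ᵥ (lam • (Qᵀ * Q) + Sᵀ * diagonal φ * S - Aᵀ * A) *ᵥ ξ =
      lam * (Q *ᵥ ξ ⬝ᵥ Q *ᵥ ξ) + (fun i => (S *ᵥ ξ) i * (S *ᵥ ξ) i) ⬝ᵥ φ - A *ᵥ ξ ⬝ᵥ A *ᵥ ξ := by
  rw [Matrix.mul_assoc, sub_mulVec, add_mulVec, dotProduct_sub, dotProduct_add, smul_mulVec,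
    dotProduct_smul, dotProduct_transpose_mul_mulVec, dotProduct_transpose_mul_mulVec,
    dotProduct_transpose_mul_mulVec, ← mulVec_mulVec, dotProduct_diagonal_mulVec_self,
    smul_eq_mul]

theorem two_mul_certificateVector_dotProduct (S : Matrix j k ℝ) (b : k → ℝ) (Q : Matrix k k ℝ)
    (c : k → ℝ) (lam : ℝ) (ψ : j → ℝ) (ξ : k → ℝ) :
    2 * ((fun i => ((Sᵀ *ᵥ ψ) i - b i - 2 * lam * ((Qᵀ * Q) *ᵥ c) i) / 2) ⬝ᵥ ξ) =
      S *ᵥ ξ ⬝ᵥ ψ - b ⬝ᵥ ξ - 2 * lam * (Q *ᵥ ξ ⬝ᵥ Q *ᵥ c) := by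
  have hq : (fun i => ((Sᵀ *ᵥ ψ) i - b i - 2 * lam * ((Qᵀ * Q) *ᵥ c) i) / 2) =
      (2 : ℝ)⁻¹ • (Sᵀ *ᵥ ψ - b - (2 * lam) • (Qᵀ * Q) *ᵥ c) := by
    ext i
    simp only [Pi.smul_apply, Pi.sub_apply, smul_eq_mul]
    ring
  rw [hq, smul_dotProduct, smul_eq_mul, ← mul_assoc, mul_inv_cancel₀ two_ne_zero, one_mul,
    sub_dotProduct, sub_dotProduct, smul_dotProduct, smul_eq_mul, dotProduct_comm (Sᵀ *ᵥ ψ),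
    dotProduct_comm ((Qᵀ * Q) *ᵥ c), dotProduct_transpose_mul_mulVec, dotProduct_mulVec,
    vecMul_transpose]

end CopositiveCertificate

theorem C0_approximation_bound_general
    (J K M : ℕ)
    (S : Matrix (Fin J) (Fin K) ℝ) (t : Fin J → ℝ)
    (A : Matrix (Fin M) (Fin K) ℝ) (b : Fin K → ℝ)
    (r : ℝ)
    (Q : Matrix (Fin K) (Fin K) ℝ) (c : Fin K → ℝ)
    (hball : ∀ ξ : Fin K → ℝ, (∀ i, 0 ≤ ξ i) → S.mulVec ξ = t →
      Q.mulVec (ξ - c) ⬝ᵥ Q.mulVec (ξ - c) ≤ r ^ 2)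
    (τ : ℝ) (lam : ℝ) (hlam : 0 ≤ lam) (h : ℝ) (hh : 0 ≤ h)
    (ψ φ : Fin J → ℝ)
    (F : Matrix (Fin K) (Fin K) ℝ) (hF : ∀ i j, 0 ≤ F i j)
    (g : Fin K → ℝ) (hg : ∀ i, 0 ≤ g i)
    (hpsd : (fromBlocks
        (lam • (Qᵀ * Q) + Sᵀ * diagonal φ * S - Aᵀ * A)
        (of fun i (_ : Unit) =>
          (Sᵀ.mulVec ψ i - b i - 2 * lam * (Qᵀ * Q).mulVec c i) / 2)
        (of fun (_ : Unit) j =>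
          (Sᵀ.mulVec ψ j - b j - 2 * lam * (Qᵀ * Q).mulVec c j) / 2)
        (of fun (_ : Unit) (_ : Unit) => τ) -
      fromBlocks F
        (of fun i (_ : Unit) => g i)
        (of fun (_ : Unit) j => g j)
        (of fun (_ : Unit) (_ : Unit) => h)).PosSemidef) :
    ∀ ξ : Fin K → ℝ, (∀ i, 0 ≤ ξ i) → S.mulVec ξ = t →
      A.mulVec ξ ⬝ᵥ A.mulVec ξ + b ⬝ᵥ ξ ≤
        t ⬝ᵥ ψ + (fun j => t j * t j) ⬝ᵥ φ + lam * r ^ 2 -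
          lam * (Q.mulVec c ⬝ᵥ Q.mulVec c) + τ := by
  intro ξ hξ hSξ
  have hz : 0 ≤ Sum.elim ξ (1 : Unit → ℝ) := by
    rintro (i | _)
    exacts [hξ i, zero_le_one]
  have hcert := dotProduct_mulVec_nonneg_of_posSemidef_sub hpsd
    (fromBlocks_border_nonneg hF hg hh) hz
  rw [dotProduct_fromBlocks_border_mulVec, dotProduct_certificateMatrix_mulVec,
    two_mul_certificateVector_dotProduct, hSξ] at hcert
  have hlamball : lam * (Q *ᵥ (ξ - c) ⬝ᵥ Q *ᵥ (ξ - c)) ≤ lam * r ^ 2 :=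
    mul_le_mul_of_nonneg_left (hball ξ hξ hSξ) hlam
  rw [mulVec_sub, sub_dotProduct_sub_self] at hlamball
  linarith

/-- Weak duality for the `C⁰` (PSD + nonnegative) inner approximation of the copositive
program: a feasible solution upper-bounds the quadratic objective over the polytope. -/
theorem C0_approximation_bound
    (J K M : ℕ)
    (S : Matrix (Fin J) (Fin K) ℝ) (t : Fin J → ℝ)
    (A : Matrix (Fin M) (Fin K) ℝ) (b : Fin K → ℝ)
    (r : ℝ) (hr : 0 < r)
    (Q : Matrix (Fin K) (Fin K) ℝ) (c : Fin K → ℝ)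
    (hball : ∀ ξ : Fin K → ℝ, (∀ i, 0 ≤ ξ i) → S.mulVec ξ = t →
      Q.mulVec (ξ - c) ⬝ᵥ Q.mulVec (ξ - c) ≤ r ^ 2)
    (τ : ℝ) (lam : ℝ) (hlam : 0 ≤ lam) (h : ℝ) (hh : 0 ≤ h)
    (ψ φ : Fin J → ℝ)
    (F : Matrix (Fin K) (Fin K) ℝ) (hF : ∀ i j, 0 ≤ F i j)
    (g : Fin K → ℝ) (hg : ∀ i, 0 ≤ g i)
    (hpsd : (fromBlocks
        (lam • (Qᵀ * Q) + Sᵀ * diagonal φ * S - Aᵀ * A)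
        (of fun i (_ : Unit) =>
          (Sᵀ.mulVec ψ i - b i - 2 * lam * (Qᵀ * Q).mulVec c i) / 2)
        (of fun (_ : Unit) j =>
          (Sᵀ.mulVec ψ j - b j - 2 * lam * (Qᵀ * Q).mulVec c j) / 2)
        (of fun (_ : Unit) (_ : Unit) => τ) -
      fromBlocks F
        (of fun i (_ : Unit) => g i)
        (of fun (_ : Unit) j => g j)
        (of fun (_ : Unit) (_ : Unit) => h)).PosSemidef) :
    ∀ ξ : Fin K → ℝ, (∀ i, 0 ≤ ξ i) → S.mulVec ξ = t →
      A.mulVec ξ ⬝ᵥ A.mulVec ξ + b ⬝ᵥ ξ ≤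
        t ⬝ᵥ ψ + (fun j => t j * t j) ⬝ᵥ φ + lam * r ^ 2 -
          lam * (Q.mulVec c ⬝ᵥ Q.mulVec c) + τ :=
  C0_approximation_bound_general J K M S t A b r Q c hball τ lam hlam h hh ψ φ F hF g hg hpsd
end

section
/- Let P ∈ ℝ^{p×n} be a matrix such that PᵀP is positive definite, let W ∈ ℝ^{T×n}, u ∈ ℝ^n, and v ∈ ℝ^T, and assume the set { y ∈ ℝ^n : Wy ≥ v } is nonempty. Then strong duality holds for the convex quadratic program with linear constraints: inf{ ‖Py‖² + uᵀy : y ∈ ℝ^n, Wy ≥ v } = sup{ vᵀθ − ¼ (Wᵀθ − u)ᵀ (PᵀP)⁻¹ (Wᵀθ − u) : θ ∈ ℝ^T, θ ≥ 0 }, and both values are finite. -/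
/-!
With `Q = PᵀP`, the primal objective `f y = yᵀ Q y + uᵀ y` is coercive, so it attains its
minimum on the closed feasible polyhedron at some `y`. Completing the square gives weak duality.
Minimality of `y` along every feasible direction says that the gradient `c = 2 Q y + u` is
nonnegative on the cone of pairs `(d, t)` with `W d + t v ≥ 0`; by Farkas' lemma `(c, cᵀ y)` then
lies in the closure of the cone `{(Wᵀ θ, vᵀ θ) : θ ≥ 0}`. The dual objective is a continuous
function of `(Wᵀ θ, vᵀ θ)` whose value at `(c, cᵀ y)` is `f y`, so the dual supremum is `f y`.
-/

open Matrix Filter Topology Set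

lemma Matrix.PosDef.isSymm {ι : Type*} {Q : Matrix ι ι ℝ} (hQ : Q.PosDef) : Q.IsSymm :=
  isHermitian_iff_isSymm.1 hQ.isHermitian

section Quadratic
variable {ι : Type*} [Fintype ι] {Q : Matrix ι ι ℝ}

lemma Matrix.IsSymm.dotProduct_mulVec_comm (hQ : Q.IsSymm) (x y : ι → ℝ) :
    x ⬝ᵥ Q *ᵥ y = y ⬝ᵥ Q *ᵥ x := by
  rw [dotProduct_mulVec, ← mulVec_transpose, hQ.eq, dotProduct_comm]

lemma Matrix.IsSymm.dotProduct_mulVec_self_sub_dotProduct [DecidableEq ι] (hQ : Q.IsSymm)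
    (hdet : IsUnit Q.det) (y s : ι → ℝ) :
    y ⬝ᵥ Q *ᵥ y - s ⬝ᵥ y =
      (y - (1 / 2 : ℝ) • Q⁻¹ *ᵥ s) ⬝ᵥ Q *ᵥ (y - (1 / 2 : ℝ) • Q⁻¹ *ᵥ s) -
        1 / 4 * (s ⬝ᵥ Q⁻¹ *ᵥ s) := by
  have hQQinv : Q *ᵥ Q⁻¹ *ᵥ s = s := by rw [mulVec_mulVec, mul_nonsing_inv _ hdet, one_mulVec]
  simp only [mulVec_sub, mulVec_smul, hQQinv, sub_dotProduct, dotProduct_sub, smul_dotProduct,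
    dotProduct_smul, smul_eq_mul]
  rw [hQ.dotProduct_mulVec_comm (Q⁻¹ *ᵥ s) y, hQQinv, dotProduct_comm (Q⁻¹ *ᵥ s) s,
    dotProduct_comm y s]
  ring

lemma Matrix.PosDef.exists_pos_mul_sq_norm_le (hQ : Q.PosDef) :
    ∃ m > 0, ∀ z : ι → ℝ, m * ‖z‖ ^ 2 ≤ z ⬝ᵥ Q *ᵥ z := by
  have hcont : Continuous fun z : ι → ℝ => z ⬝ᵥ Q *ᵥ z := by fun_prop
  obtain ⟨m, hm, hmle⟩ := (isCompact_sphere (0 : ι → ℝ) 1).exists_forall_le' hcont.continuousOn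
    (a := 0) fun z hz => by
      simpa using hQ.dotProduct_mulVec_pos (ne_zero_of_mem_unit_sphere ⟨z, hz⟩)
  refine ⟨m, hm, fun z => ?_⟩
  rcases eq_or_ne z 0 with rfl | hz
  · simp
  have hz' : 0 < ‖z‖ := norm_pos_iff.2 hz
  have hunit := hmle (‖z‖⁻¹ • z) (by simp [norm_smul, hz'.ne'])
  simp only [mulVec_smul, dotProduct_smul, smul_dotProduct, smul_eq_mul] at hunit
  have : m * ‖z‖ ^ 2 ≤ ‖z‖⁻¹ * (‖z‖⁻¹ * (z ⬝ᵥ Q *ᵥ z)) * ‖z‖ ^ 2 :=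
    mul_le_mul_of_nonneg_right hunit (by positivity)
  field_simp at this
  linarith

end Quadratic

lemma nonneg_of_forall_mul_add_sq_mul_nonneg {a b δ : ℝ} (hδ : 0 < δ)
    (h : ∀ ε, 0 < ε → ε ≤ δ → 0 ≤ ε * a + ε ^ 2 * b) : 0 ≤ a := by
  have hev : ∀ᶠ ε in 𝓝[>] (0 : ℝ), 0 ≤ a + ε * b := by
    filter_upwards [Ioc_mem_nhdsGT hδ] with ε ⟨hε, hεδ⟩
    refine nonneg_of_mul_nonneg_right ?_ hε
    linarith [h ε hε hεδ]
  have hlim : Tendsto (fun ε : ℝ => a + ε * b) (𝓝[>] 0) (𝓝 a) :=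
    ((continuous_const.add (continuous_id.mul continuous_const)).tendsto' 0 a (by simp)).mono_left
      nhdsWithin_le_nhds
  exact ge_of_tendsto hlim hev

section Farkas

lemma mem_closure_image_nonneg_of_forall_dual {ι E : Type*} [DecidableEq ι] [AddCommGroup E]
    [TopologicalSpace E] [IsTopologicalAddGroup E] [Module ℝ E] [ContinuousSMul ℝ E]
    [LocallyConvexSpace ℝ E] (L : (ι → ℝ) →L[ℝ] E) {b : E}
    (h : ∀ φ : StrongDual ℝ E, (∀ i, 0 ≤ φ (L (Pi.single i 1))) → 0 ≤ φ b) :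
    b ∈ closure (L '' Ici 0) := by
  by_contra hb
  obtain ⟨φ, hφ, hφb⟩ := ((ProperCone.positive ℝ (ι → ℝ)).map L).hyperplane_separation_point
    (x₀ := b) (by simpa [ProperCone.mem_map, PointedCone.mem_closure] using hb)
  refine hφb.not_ge (h φ fun i => hφ _ ?_)
  rw [ProperCone.mem_map, PointedCone.mem_closure]
  exact subset_closure ⟨Pi.single i 1, Pi.single_nonneg.2 zero_le_one, rfl⟩

variable {ι κ : Type*} [Fintype ι] [Fintype κ] [DecidableEq ι] [DecidableEq κ]

lemma StrongDual.apply_prod_eq_dotProduct_add (φ : StrongDual ℝ ((ι → ℝ) × ℝ)) (x : ι → ℝ)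
    (s : ℝ) : φ (x, s) = x ⬝ᵥ (fun i => φ (Pi.single i 1, 0)) + φ (0, 1) * s := by
  have hx : ((x, s) : (ι → ℝ) × ℝ) = ∑ i, x i • (Pi.single i 1, 0) + s • (0, 1) := by
    conv_lhs => rw [pi_eq_sum_univ' x]
    ext <;> simp [Prod.fst_sum, Prod.snd_sum]
  rw [hx, map_add, map_sum]
  simp only [map_smul, smul_eq_mul, dotProduct, mul_comm]

lemma mem_closure_image_nonneg_of_forall_mulVec_nonneg (W : Matrix κ ι ℝ) (v : κ → ℝ)
    {c : ι → ℝ} {γ : ℝ}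
    (h : ∀ (d : ι → ℝ) (t : ℝ), 0 ≤ W *ᵥ d + t • v → 0 ≤ c ⬝ᵥ d + t * γ) :
    (c, γ) ∈ closure ((fun θ => (Wᵀ *ᵥ θ, v ⬝ᵥ θ)) '' Ici 0) := by
  let L : (κ → ℝ) →L[ℝ] (ι → ℝ) × ℝ := LinearMap.toContinuousLinearMap
    ((mulVecLin Wᵀ).prod (dotProductBilin ℝ ℝ v))
  refine mem_closure_image_nonneg_of_forall_dual L fun φ hφ => ?_
  rw [φ.apply_prod_eq_dotProduct_add]
  refine h _ _ fun j => ?_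
  have hj := hφ j
  have hL : L (Pi.single j 1) = (W j, v j) := by
    change (Wᵀ *ᵥ Pi.single j 1, v ⬝ᵥ Pi.single j 1) = _
    rw [mulVec_single_one, dotProduct_single, mul_one]
    rfl
  rw [hL, φ.apply_prod_eq_dotProduct_add] at hj
  simpa [mulVec, mul_comm] using hj

end Farkas

lemma le_mulVec_add_smul {ι κ : Type*} [Fintype ι] {W : Matrix κ ι ℝ} {v : κ → ℝ}
    {y d : ι → ℝ} {t ε : ℝ} (hy : v ≤ W *ᵥ y) (hd : 0 ≤ W *ᵥ d + t • v) (hε : 0 ≤ ε)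
    (hεt : 0 ≤ 1 + ε * t) :
    v ≤ W *ᵥ (y + ε • (d + t • y)) := fun i => by
  have hyi := hy i
  have hdi := hd i
  simp only [mulVec_add, mulVec_smul, Pi.add_apply, Pi.smul_apply, smul_eq_mul,
    Pi.zero_apply] at hyi hdi ⊢
  nlinarith [mul_nonneg hεt (sub_nonneg.2 hyi), mul_nonneg hε hdi]

section QuadraticProgram
variable {ι κ : Type*} [Fintype ι]

noncomputable def qpObjective (Q : Matrix ι ι ℝ) (u y : ι → ℝ) : ℝ := y ⬝ᵥ Q *ᵥ y + u ⬝ᵥ y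

noncomputable def qpDualObjective [Fintype κ] [DecidableEq ι] (Q : Matrix ι ι ℝ)
    (W : Matrix κ ι ℝ) (u : ι → ℝ) (v θ : κ → ℝ) : ℝ :=
  v ⬝ᵥ θ - 1 / 4 * ((Wᵀ *ᵥ θ - u) ⬝ᵥ Q⁻¹ *ᵥ (Wᵀ *ᵥ θ - u))

variable {Q : Matrix ι ι ℝ} (W : Matrix κ ι ℝ) (u : ι → ℝ) (v : κ → ℝ)

lemma exists_pos_mul_sq_norm_sub_sub_le_qpObjective (hQ : Q.PosDef) :
    ∃ m > 0, ∃ (a : ι → ℝ) (C : ℝ), ∀ y, m * ‖y - a‖ ^ 2 - C ≤ qpObjective Q u y := by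
  classical
  obtain ⟨m, hm, hmle⟩ := hQ.exists_pos_mul_sq_norm_le
  refine ⟨m, hm, (1 / 2 : ℝ) • Q⁻¹ *ᵥ (-u), 1 / 4 * (-u ⬝ᵥ Q⁻¹ *ᵥ (-u)), fun y => ?_⟩
  have hsq := hQ.isSymm.dotProduct_mulVec_self_sub_dotProduct
    (isUnit_iff_ne_zero.2 hQ.det_pos.ne') y (-u)
  rw [neg_dotProduct, sub_neg_eq_add] at hsq
  rw [qpObjective, hsq]
  linarith [hmle (y - (1 / 2 : ℝ) • Q⁻¹ *ᵥ (-u))]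

lemma tendsto_qpObjective_cocompact (hQ : Q.PosDef) :
    Tendsto (qpObjective Q u) (cocompact _) atTop := by
  obtain ⟨m, hm, a, C, hle⟩ := exists_pos_mul_sq_norm_sub_sub_le_qpObjective u hQ
  have hnorm : Tendsto (fun y : ι → ℝ => ‖y - a‖) (cocompact _) atTop :=
    tendsto_atTop_mono (fun y => norm_sub_norm_le y a)
      (tendsto_atTop_add_const_right _ _ tendsto_norm_cocompact_atTop)
  refine tendsto_atTop_mono hle (tendsto_atTop_add_const_right _ _ ?_)
  exact ((tendsto_pow_atTop two_ne_zero).const_mul_atTop hm).comp hnorm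

lemma exists_isMinOn_qpObjective (hQ : Q.PosDef) {S : Set (ι → ℝ)} (hS : IsClosed S)
    (hne : S.Nonempty) : ∃ y ∈ S, IsMinOn (qpObjective Q u) S y := by
  obtain ⟨y₀, hy₀⟩ := hne
  have hcont : Continuous (qpObjective Q u) := by unfold qpObjective; fun_prop
  exact hcont.continuousOn.exists_isMinOn' hS hy₀
    (((tendsto_qpObjective_cocompact u hQ).eventually_ge_atTop _).filter_mono inf_le_left)

lemma qpDualObjective_le_qpObjective [Fintype κ] [DecidableEq ι] (hQ : Q.PosDef) {θ : κ → ℝ}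
    (hθ : 0 ≤ θ) {y : ι → ℝ} (hy : v ≤ W *ᵥ y) : qpDualObjective Q W u v θ ≤ qpObjective Q u y := by
  set s := Wᵀ *ᵥ θ - u
  have hsq := hQ.isSymm.dotProduct_mulVec_self_sub_dotProduct
    (isUnit_iff_ne_zero.2 hQ.det_pos.ne') y s
  have hcross : s ⬝ᵥ y + u ⬝ᵥ y = θ ⬝ᵥ W *ᵥ y := by
    rw [sub_dotProduct, mulVec_transpose, ← dotProduct_mulVec]; ring
  have hzQz := hQ.posSemidef.dotProduct_mulVec_nonneg (y - (1 / 2 : ℝ) • Q⁻¹ *ᵥ s)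
  have hvθ : v ⬝ᵥ θ ≤ θ ⬝ᵥ W *ᵥ y := by
    rw [dotProduct_comm]; exact dotProduct_le_dotProduct_of_nonneg_left hy hθ
  simp only [star_trivial] at hzQz
  rw [qpDualObjective, qpObjective]
  linarith

lemma qpObjective_add_smul (hQ : Q.IsSymm) (y z : ι → ℝ) (ε : ℝ) :
    qpObjective Q u (y + ε • z) =
      qpObjective Q u y + ε * (((2 : ℝ) • Q *ᵥ y + u) ⬝ᵥ z) + ε ^ 2 * (z ⬝ᵥ Q *ᵥ z) := by
  simp only [qpObjective, mulVec_add, mulVec_smul, dotProduct_add, add_dotProduct,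
    dotProduct_smul, smul_dotProduct, smul_eq_mul, hQ.dotProduct_mulVec_comm z y,
    dotProduct_comm (Q *ᵥ y) z]
  ring

lemma IsMinOn.gradient_qpObjective_nonneg (hQ : Q.IsSymm) {y : ι → ℝ} (hy : v ≤ W *ᵥ y)
    (hmin : IsMinOn (qpObjective Q u) {y | v ≤ W *ᵥ y} y) {d : ι → ℝ} {t : ℝ}
    (hdt : 0 ≤ W *ᵥ d + t • v) :
    0 ≤ ((2 : ℝ) • Q *ᵥ y + u) ⬝ᵥ d + t * (((2 : ℝ) • Q *ᵥ y + u) ⬝ᵥ y) := by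
  set c := (2 : ℝ) • Q *ᵥ y + u
  set z := d + t • y
  have hcz : c ⬝ᵥ z = c ⬝ᵥ d + t * (c ⬝ᵥ y) := by
    rw [dotProduct_add, dotProduct_smul, smul_eq_mul]
  rw [← hcz]
  refine nonneg_of_forall_mul_add_sq_mul_nonneg (b := z ⬝ᵥ Q *ᵥ z) (δ := 1 / (1 + |t|))
    (by positivity) fun ε hε hεδ => ?_
  have hεt : 0 ≤ 1 + ε * t := by
    rw [le_div_iff₀ (by positivity)] at hεδ
    nlinarith [mul_le_mul_of_nonneg_left (neg_abs_le t) hε.le]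
  have hle := isMinOn_iff.1 hmin _ (le_mulVec_add_smul hy hdt hε.le hεt)
  rw [qpObjective_add_smul u hQ] at hle
  linarith

lemma qpObjective_mem_closure_image_qpDualObjective [Fintype κ] [DecidableEq ι] [DecidableEq κ]
    (hQ : Q.PosDef) {y : ι → ℝ} (hy : v ≤ W *ᵥ y)
    (hmin : IsMinOn (qpObjective Q u) {y | v ≤ W *ᵥ y} y) :
    qpObjective Q u y ∈ closure (qpDualObjective Q W u v '' Ici 0) := by
  set c := (2 : ℝ) • Q *ᵥ y + u
  have hfarkas := mem_closure_image_nonneg_of_forall_mulVec_nonneg W v (c := c) (γ := c ⬝ᵥ y)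
    fun d t hdt => hmin.gradient_qpObjective_nonneg W u v hQ.isSymm hy hdt
  let G : (ι → ℝ) × ℝ → ℝ := fun p => p.2 - 1 / 4 * ((p.1 - u) ⬝ᵥ Q⁻¹ *ᵥ (p.1 - u))
  have hG : Continuous G := by fun_prop
  have hGc : G (c, c ⬝ᵥ y) = qpObjective Q u y := by
    have hcu : c - u = (2 : ℝ) • Q *ᵥ y := add_sub_cancel_right _ _
    simp only [G, hcu, mulVec_smul, mulVec_mulVec,
      nonsing_inv_mul _ (isUnit_iff_ne_zero.2 hQ.det_pos.ne'), one_mulVec, c, qpObjective,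
      add_dotProduct, smul_dotProduct, dotProduct_smul, smul_eq_mul, dotProduct_comm (Q *ᵥ y) y]
    ring
  have hmem := mem_closure_image hG.continuousAt hfarkas
  rw [image_image, hGc] at hmem
  exact hmem

theorem exists_sInf_qpObjective_eq_sSup_qpDualObjective [Fintype κ] [DecidableEq ι] [DecidableEq κ]
    (hQ : Q.PosDef) (hne : {y | v ≤ W *ᵥ y}.Nonempty) :
    ∃ val : ℝ, sInf (((↑) : ℝ → EReal) '' (qpObjective Q u '' {y | v ≤ W *ᵥ y})) = val ∧
      sSup (((↑) : ℝ → EReal) '' (qpDualObjective Q W u v '' Ici 0)) = val := by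
  obtain ⟨y, hy, hmin⟩ := exists_isMinOn_qpObjective u hQ
    (isClosed_le continuous_const (by fun_prop)) hne
  refine ⟨qpObjective Q u y, ?_, ?_⟩
  · exact (EReal.coe_strictMono.monotone.map_isLeast
      ⟨mem_image_of_mem _ hy, forall_mem_image.2 fun _ hy' => hmin hy'⟩).csInf_eq
  · refine (isLUB_of_mem_closure ?_ (mem_closure_image continuous_coe_real_ereal.continuousAt
      (qpObjective_mem_closure_image_qpDualObjective W u v hQ hy hmin))).sSup_eq
    exact EReal.coe_strictMono.monotone.mem_upperBounds_image
      (forall_mem_image.2 fun _ hθ => qpDualObjective_le_qpObjective W u v hQ hθ hy)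

end QuadraticProgram

lemma Matrix.mulVec_dotProduct_mulVec_self {m n : Type*} [Fintype m] [Fintype n]
    (P : Matrix m n ℝ) (y : n → ℝ) : P *ᵥ y ⬝ᵥ P *ᵥ y = y ⬝ᵥ (Pᵀ * P) *ᵥ y := by
  rw [← mulVec_mulVec, dotProduct_mulVec y, vecMul_transpose]

/-- Strong duality for a convex quadratic program with strictly convex objective and a
nonempty linear-inequality feasible set: the primal infimum equals the dual supremum and
both values are finite. -/
theorem quadratic_program_strong_duality
    (p n T : ℕ)
    (P : Matrix (Fin p) (Fin n) ℝ) (hP : (Pᵀ * P).PosDef)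
    (W : Matrix (Fin T) (Fin n) ℝ) (u : Fin n → ℝ) (v : Fin T → ℝ)
    (hne : ∃ y : Fin n → ℝ, ∀ i, v i ≤ W.mulVec y i) :
    ∃ val : ℝ,
      sInf {z : EReal | ∃ y : Fin n → ℝ, (∀ i, v i ≤ W.mulVec y i) ∧
          z = ((P.mulVec y ⬝ᵥ P.mulVec y + u ⬝ᵥ y : ℝ) : EReal)} = (val : EReal) ∧
      sSup {z : EReal | ∃ θ : Fin T → ℝ, (∀ i, 0 ≤ θ i) ∧
          z = ((v ⬝ᵥ θ - (1 / 4) * ((Wᵀ.mulVec θ - u) ⬝ᵥ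
            (Pᵀ * P)⁻¹.mulVec (Wᵀ.mulVec θ - u)) : ℝ) : EReal)} = (val : EReal) := by
  obtain ⟨val, hinf, hsup⟩ := exists_sInf_qpObjective_eq_sSup_qpDualObjective W u v hP hne
  refine ⟨val, ?_, ?_⟩
  · rw [← hinf, image_image]
    congr 1; ext z
    simp only [mem_ofPred_eq, mem_image]
    exact exists_congr fun y => and_congr Iff.rfl
      (by rw [eq_comm, qpObjective, mulVec_dotProduct_mulVec_self])
  · rw [← hsup, image_image]
    congr 1; ext z
    exact exists_congr fun θ => and_congr Iff.rfl eq_comm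
end
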